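/- arXiv:2502.02200 — 5 statements merged into one kernel-verified Lean document; each statement's English description precedes it below -/
import Mathlib

section
/- For every positive rational α and every positive integer n, if A is an α-partition of n, then the cardinality of A is greater than e^α/3 and n > e^{2α}/18. In particular no integer n ≤ e^{2α}/18 admits an α-partition, so N(α) > e^{2α}/18. -/
/-- An `α`-partition of `n`: a finite set of distinct positive integers summing to `n`
whose reciprocals sum to `α`. -/
def IsPartition (α : ℚ) (n : ℕ) (A : Finset ℕ) : Prop :=
  (∀ a ∈ A, 0 < a) ∧ (∑ a ∈ A, a) = n ∧ (∑ a ∈ A, (1 : ℚ) / a) = α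

/-- If `A` is an `α`-partition of `n`, then `|A| > e^α/3` and `n > e^{2α}/18`. -/
theorem nalpha_lower_bound (α : ℚ) (hα : 0 < α) (n : ℕ) (hn : 0 < n)
    (A : Finset ℕ) (hA : IsPartition α n A) :
    Real.exp (α : ℝ) / 3 < (A.card : ℝ) ∧ Real.exp (2 * (α : ℝ)) / 18 < (n : ℝ) := by
  obtain ⟨hpos, hsumA, hrecip⟩ := hA
  set k := A.card with hk
  have hcard : A.card = k := rfl
  have hkpos : 0 < k := by
    rcases Nat.eq_zero_or_pos k with h0 | h; swap; · exact h
    exfalso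
    have : A = ∅ := Finset.card_eq_zero.mp h0
    rw [this, Finset.sum_empty] at hrecip
    exact absurd hrecip.symm (ne_of_gt hα)
  set e := A.orderEmbOfFin hcard with he
  have hmem : ∀ i : Fin k, e i ∈ A := fun i => A.orderEmbOfFin_mem hcard i
  -- the i-th smallest element is at least i+1
  have key' : ∀ m, ∀ i : Fin k, i.val = m → m + 1 ≤ e i := by
    intro m
    induction m with
    | zero => intro i _; exact hpos _ (hmem i)
    | succ m ih =>
      intro i hi
      have hm : m < k := by omega
      have hlt : (⟨m, hm⟩ : Fin k) < i := by
        simp [Fin.lt_def, hi]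
      have h1 := (A.orderEmbOfFin hcard).strictMono hlt
      have h2 := ih ⟨m, hm⟩ rfl
      simp only [← he] at h1 h2
      omega
  have key : ∀ i : Fin k, i.val + 1 ≤ e i := fun i => key' i.val i rfl
  -- rewriting sums over A as sums over Fin k
  have hsurj : ∀ a ∈ A, ∃ i, ∃ _ : i ∈ (Finset.univ : Finset (Fin k)), e i = a := by
    intro a ha
    have : a ∈ Set.range e := by
      rw [he, A.range_orderEmbOfFin hcard]; exact ha
    obtain ⟨i, hi⟩ := this
    exact ⟨i, Finset.mem_univ i, hi⟩
  have hsum_eq : ∀ {M : Type} [AddCommMonoid M] (f : ℕ → M),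
      ∑ a ∈ A, f a = ∑ i : Fin k, f (e i) := by
    intro M _ f
    exact (Finset.sum_bij (fun (i : Fin k) _ => e i) (fun i _ => hmem i)
      (fun i _ j _ h => e.injective h) hsurj (fun i _ => rfl)).symm
  -- bound on α via harmonic numbers
  have hα_le : α ≤ harmonic k := by
    rw [← hrecip, hsum_eq (fun a => (1 : ℚ) / a)]
    have : harmonic k = ∑ i : Fin k, (1 : ℚ) / (i.val + 1) := by
      rw [harmonic, Fin.sum_univ_eq_sum_range (fun i => (1 : ℚ) / (i + 1))]
      refine Finset.sum_congr rfl fun i _ => ?_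
      rw [one_div]
      push_cast
      ring_nf
    rw [this]
    refine Finset.sum_le_sum fun i _ => ?_
    refine one_div_le_one_div_of_le (by positivity) ?_
    have := key i
    push_cast
    exact_mod_cast this
  have hharm : (harmonic k : ℝ) ≤ 1 + Real.log k := harmonic_le_one_add_log k
  have hαR : (α : ℝ) ≤ 1 + Real.log k := by
    refine le_trans ?_ hharm
    exact_mod_cast hα_le
  have hkR : (0 : ℝ) < k := by exact_mod_cast hkpos
  have hexp : Real.exp (α : ℝ) ≤ Real.exp 1 * k := by
    calc Real.exp (α : ℝ) ≤ Real.exp (1 + Real.log k) := Real.exp_le_exp.mpr hαR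
      _ = Real.exp 1 * k := by rw [Real.exp_add, Real.exp_log hkR]
  have he1 : Real.exp 1 < 3 := by
    have := Real.exp_one_lt_d9
    linarith
  have hfirst : Real.exp (α : ℝ) / 3 < (k : ℝ) := by
    have h3 : Real.exp (α : ℝ) < 3 * k := by
      calc Real.exp (α : ℝ) ≤ Real.exp 1 * k := hexp
        _ < 3 * k := by nlinarith
    linarith
  refine ⟨hfirst, ?_⟩
  -- second bound: n ≥ k(k+1)/2 > k²/2 > e^{2α}/18
  have hnk : ∑ i ∈ Finset.range k, (i + 1) ≤ n := by
    rw [← hsumA, hsum_eq (fun a => a), ← Fin.sum_univ_eq_sum_range (fun i => i + 1)]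
    exact Finset.sum_le_sum fun i _ => key i
  have hgR : (∑ i ∈ Finset.range k, (i : ℝ)) * 2 = (k : ℝ) * ((k : ℝ) - 1) := by
    have hg := congrArg (Nat.cast : ℕ → ℝ) (Finset.sum_range_id_mul_two k)
    rw [Nat.cast_mul, Nat.cast_mul, Nat.cast_sub hkpos, Nat.cast_sum] at hg
    push_cast at hg ⊢
    linarith
  have hSR : (∑ i ∈ Finset.range k, ((i : ℝ) + 1)) ≤ (n : ℝ) := by
    have h1 : ((∑ i ∈ Finset.range k, (i + 1) : ℕ) : ℝ) ≤ (n : ℝ) := by exact_mod_cast hnk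
    rw [Nat.cast_sum] at h1
    push_cast at h1
    exact h1
  have hsplitR : (∑ i ∈ Finset.range k, ((i : ℝ) + 1))
      = (∑ i ∈ Finset.range k, (i : ℝ)) + k := by
    rw [Finset.sum_add_distrib, Finset.sum_const, Finset.card_range]
    push_cast
    ring
  have hnR : (k : ℝ) * k / 2 < (n : ℝ) := by nlinarith
  have hx : Real.exp (2 * (α : ℝ)) = Real.exp (α : ℝ) * Real.exp (α : ℝ) := by
    rw [← Real.exp_add]; ring_nf
  have hepos : 0 < Real.exp (α : ℝ) := Real.exp_pos _
  rw [hx]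
  nlinarith [hfirst, hepos, hnR]
end

section
/- Let M be a positive integer and let α, β, γ be positive rationals with α = β/M + γ. Suppose there is a positive integer N such that for every integer n ≥ N there exists an M-free γ-partition of n, and suppose there is a positive integer n₀ admitting a β-partition. Then every integer n ≥ M·n₀ + N admits an α-partition; that is, N(α) ≤ M·n₀ + N. -/
/-- If `α = β/M + γ`, `M`-free `γ`-partitions exist for all `n ≥ N`, and some `n₀`
admits a `β`-partition, then every `n ≥ M·n₀ + N` admits an `α`-partition. -/
theorem lifting_lemma (M : ℕ) (hM : 0 < M) (α β γ : ℚ) (hα : 0 < α) (hβ : 0 < β)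
    (hγ : 0 < γ) (heq : α = β / (M : ℚ) + γ) (N : ℕ) (hN : 0 < N)
    (hfree : ∀ n : ℕ, N ≤ n → ∃ C : Finset ℕ, IsPartition γ n C ∧ ∀ a ∈ C, ¬ (M ∣ a))
    (n₀ : ℕ) (hn₀ : 0 < n₀) (hB : ∃ B : Finset ℕ, IsPartition β n₀ B) :
    ∀ n : ℕ, M * n₀ + N ≤ n → ∃ A : Finset ℕ, IsPartition α n A := by
  intro n hn
  obtain ⟨B, hBpos, hBsum, hBrec⟩ := hB
  have hmge : N ≤ n - M * n₀ := le_tsub_of_add_le_left hn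
  obtain ⟨C, ⟨hCpos, hCsum, hCrec⟩, hCfree⟩ := hfree (n - M * n₀) hmge
  have hinj : Set.InjOn (fun b => M * b) B := fun x _ y _ h => by
    exact Nat.eq_of_mul_eq_mul_left hM h
  have hdisj : Disjoint (B.image (fun b => M * b)) C := by
    rw [Finset.disjoint_left]
    intro a ha haC
    obtain ⟨b, _, rfl⟩ := Finset.mem_image.mp ha
    exact hCfree _ haC ⟨b, rfl⟩
  refine ⟨B.image (fun b => M * b) ∪ C, ?_, ?_, ?_⟩
  · intro a ha
    rcases Finset.mem_union.mp ha with h | h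
    · obtain ⟨b, hb, rfl⟩ := Finset.mem_image.mp h
      exact Nat.mul_pos hM (hBpos b hb)
    · exact hCpos a h
  · rw [Finset.sum_union hdisj, Finset.sum_image hinj, ← Finset.mul_sum, hBsum, hCsum]
    omega
  · rw [Finset.sum_union hdisj, Finset.sum_image hinj, hCrec, heq]
    congr 1
    rw [eq_div_iff (by exact_mod_cast hM.ne'), Finset.sum_mul, ← hBrec]
    refine Finset.sum_congr rfl fun b hb => ?_
    have hb0 : (b : ℚ) ≠ 0 := Nat.cast_ne_zero.mpr (hBpos b hb).ne'
    have hM0 : (M : ℚ) ≠ 0 := Nat.cast_ne_zero.mpr hM.ne'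
    push_cast
    field_simp
end

section
/- For every integer k ≥ 2 there exists a positive integer N < 106·4^k such that for every integer n ≥ N there exists a 5-free (4/3^k)-partition of n. -/
namespace IsPartition

variable {α β : ℚ} {m n : ℕ} {A B : Finset ℕ}

theorem erase (h : IsPartition α n A) {s : ℕ} (hs : s ∈ A) :
    IsPartition (α - 1 / s) (n - s) (A.erase s) := by
  obtain ⟨hpos, hsum, hrec⟩ := h
  refine ⟨fun a ha => hpos a (Finset.mem_of_mem_erase ha), ?_, ?_⟩
  · rw [← hsum, ← Finset.sum_erase_add A _ hs, Nat.add_sub_cancel]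
  · rw [Finset.sum_erase_eq_sub hs, hrec]

theorem image_mul (h : IsPartition α n A) {c : ℕ} (hc : 0 < c) :
    IsPartition (α / c) (c * n) (A.image (c * ·)) := by
  obtain ⟨hpos, hsum, hrec⟩ := h
  have hinj : Set.InjOn (c * ·) A := fun x _ y _ hxy => Nat.eq_of_mul_eq_mul_left hc hxy
  refine ⟨?_, ?_, ?_⟩
  · simp only [Finset.mem_image]
    rintro _ ⟨a, ha, rfl⟩
    exact Nat.mul_pos hc (hpos a ha)
  · rw [Finset.sum_image hinj, ← Finset.mul_sum, hsum]
  · rw [Finset.sum_image hinj, ← hrec, Finset.sum_div]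
    refine Finset.sum_congr rfl fun a _ => ?_
    push_cast
    rw [div_div, mul_comm]

theorem union (hA : IsPartition α m A) (hB : IsPartition β n B) (hAB : Disjoint A B) :
    IsPartition (α + β) (m + n) (A ∪ B) := by
  obtain ⟨hApos, hAsum, hArec⟩ := hA
  obtain ⟨hBpos, hBsum, hBrec⟩ := hB
  refine ⟨fun a ha => ?_, ?_, ?_⟩
  · rcases Finset.mem_union.mp ha with ha | ha
    exacts [hApos a ha, hBpos a ha]
  · rw [Finset.sum_union hAB, hAsum, hBsum]
  · rw [Finset.sum_union hAB, hArec, hBrec]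

theorem le_of_mem (h : IsPartition α n A) {a : ℕ} (ha : a ∈ A) : a ≤ n :=
  h.2.1 ▸ Finset.single_le_sum (f := fun a => a) (fun _ _ => Nat.zero_le _) ha

end IsPartition

theorem sum_one_div_eq_of_dvd {D : ℕ} (hD : D ≠ 0) {A : Finset ℕ} (h : ∀ a ∈ A, a ∣ D) :
    ∑ a ∈ A, (1 : ℚ) / a = ((∑ a ∈ A, D / a : ℕ) : ℚ) / D := by
  rw [Nat.cast_sum, Finset.sum_div]
  refine Finset.sum_congr rfl fun a ha => ?_
  have ha0 : (a : ℚ) ≠ 0 := by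
    rintro h0
    exact hD (Nat.eq_zero_of_zero_dvd (Nat.cast_eq_zero.mp h0 ▸ h a ha))
  rw [Nat.cast_div (h a ha) ha0]
  field_simp

theorem not_dvd_of_mem_image_mul {p c : ℕ} (hp : p.Prime) (hc : ¬ p ∣ c) {A : Finset ℕ}
    (hA : ∀ a ∈ A, ¬ p ∣ a) : ∀ x ∈ A.image (c * ·), ¬ p ∣ x := by
  simp only [Finset.mem_image]
  rintro _ ⟨a, ha, rfl⟩ hdvd
  exact (hp.dvd_mul.mp hdvd).elim hc (hA a ha)

theorem disjoint_image_mul {c : ℕ} (hc : 0 < c) {A U G : Finset ℕ} (hAG : Disjoint A G)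
    (hU : ∀ u ∈ U, c ∣ u → u / c ∈ G) : Disjoint (A.image (c * ·)) U := by
  rw [Finset.disjoint_left]
  simp only [Finset.mem_image]
  rintro _ ⟨a, ha, rfl⟩ hU'
  have := hU _ hU' (dvd_mul_right c a)
  rw [Nat.mul_div_cancel_left a hc] at this
  exact Finset.disjoint_left.mp hAG ha this

theorem div_mem_image_mul_of_dvd {p z : ℕ} (hp : p.Prime) (hz : ¬ p ∣ z) {W E : Finset ℕ}
    (hW : ∀ c ∈ W, p ∣ c → c / p ∈ E) :
    ∀ u ∈ W.image (z * ·), p ∣ u → u / p ∈ E.image (z * ·) := by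
  simp only [Finset.mem_image]
  rintro _ ⟨c, hc, rfl⟩ hdvd
  obtain ⟨c', rfl⟩ := (hp.dvd_mul.mp hdvd).resolve_left hz
  refine ⟨c', by simpa [hp.pos] using hW _ hc (dvd_mul_right p c'), ?_⟩
  rw [mul_left_comm, Nat.mul_div_cancel_left _ hp.pos]

def baseExcluded : Finset ℕ :=
  {1, 2, 3, 4, 8, 9, 11, 13, 22, 26, 33, 39, 44, 52, 63, 66, 78, 88, 104, 132, 176}

def levelExcluded : Finset ℕ := {4, 22, 39, 44, 52, 66, 88}

def HasBasePartition (n : ℕ) : Prop :=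
  ∃ A : Finset ℕ, IsPartition (4 / 9) n A ∧ (∀ a ∈ A, ¬ 5 ∣ a) ∧ 6 ∈ A ∧
    Disjoint A baseExcluded

def HasLevelPartition (α : ℚ) (z n : ℕ) : Prop :=
  ∃ A : Finset ℕ, IsPartition α n A ∧ (∀ a ∈ A, ¬ 5 ∣ a) ∧ 3 * z ∈ A ∧
    Disjoint A (levelExcluded.image (z * ·))

def IsDoublingStep (U : Finset ℕ) (s : ℕ) : Prop :=
  IsPartition (2 / 9) s U ∧ (∀ u ∈ U, ¬ 5 ∣ u) ∧ 6 ∈ U ∧ Disjoint U baseExcluded ∧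
    ∀ u ∈ U, 2 ∣ u → u / 2 ∈ baseExcluded

def IsLevelStep (W : Finset ℕ) (d : ℕ) : Prop :=
  IsPartition (1 / 9) (d + 9) W ∧ (∀ c ∈ W, ¬ 5 ∣ c) ∧ 12 ∈ W ∧
    (∀ c ∈ W, 3 ∣ c → c / 3 ∈ levelExcluded) ∧ Disjoint W (levelExcluded.image (4 * ·))

theorem baseExcluded_half_mem : ∀ g ∈ baseExcluded, 2 ∣ g → g / 2 ∈ baseExcluded := by
  decide

theorem levelExcluded_image_four_mul_third_mem :
    ∀ c ∈ levelExcluded.image (4 * ·), 3 ∣ c → c / 3 ∈ levelExcluded := by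
  decide

theorem levelExcluded_image_two_mul_subset : levelExcluded.image (2 * ·) ⊆ baseExcluded := by
  decide

theorem isDoublingStep_even : IsDoublingStep {6, 18} 24 := by
  refine ⟨⟨?_, ?_, ?_⟩, ?_, ?_, ?_, ?_⟩ <;> norm_num [baseExcluded]

theorem isDoublingStep_odd : IsDoublingStep {6, 21, 126} 153 := by
  refine ⟨⟨?_, ?_, ?_⟩, ?_, ?_, ?_, ?_⟩ <;> norm_num [baseExcluded]

theorem isLevelStep_399 : IsLevelStep {12, 66, 132, 198} 399 := by
  refine ⟨⟨?_, ?_, ?_⟩, ?_, ?_, ?_, ?_⟩ <;> norm_num [levelExcluded]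

theorem isLevelStep_245 : IsLevelStep {12, 44, 198} 245 := by
  refine ⟨⟨?_, ?_, ?_⟩, ?_, ?_, ?_, ?_⟩ <;> norm_num [levelExcluded]

theorem isLevelStep_172 : IsLevelStep {12, 52, 117} 172 := by
  refine ⟨⟨?_, ?_, ?_⟩, ?_, ?_, ?_, ?_⟩ <;> norm_num [levelExcluded]

theorem HasBasePartition.double {m s : ℕ} {U : Finset ℕ} (hU : IsDoublingStep U s)
    (h : HasBasePartition m) : HasBasePartition (2 * m + s) := by
  obtain ⟨hUpart, hU5, hU6, hUG, hUhalf⟩ := hU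
  obtain ⟨A, hA, hA5, -, hAG⟩ := h
  refine ⟨A.image (2 * ·) ∪ U, ?_, ?_, Finset.mem_union_right _ hU6, ?_⟩
  · have := (hA.image_mul two_pos).union hUpart (disjoint_image_mul two_pos hAG hUhalf)
    convert this using 1
    norm_num
  · intro x hx
    rcases Finset.mem_union.mp hx with hx | hx
    exacts [not_dvd_of_mem_image_mul Nat.prime_five (by norm_num) hA5 x hx, hU5 x hx]
  · exact Finset.disjoint_union_left.mpr
      ⟨disjoint_image_mul two_pos hAG baseExcluded_half_mem, hUG⟩

theorem HasBasePartition.hasLevelPartition {n : ℕ} (h : HasBasePartition n) :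
    HasLevelPartition (4 / 9) 2 n := by
  obtain ⟨A, hA, hA5, hA6, hAG⟩ := h
  exact ⟨A, hA, hA5, hA6, hAG.mono_right levelExcluded_image_two_mul_subset⟩

theorem HasLevelPartition.step {α : ℚ} {z m d : ℕ} {W : Finset ℕ} (hW : IsLevelStep W d)
    (hz3 : ¬ 3 ∣ z) (hz5 : ¬ 5 ∣ z) (h : HasLevelPartition α z m) :
    HasLevelPartition (α / 3) (4 * z) (3 * m + d * z) := by
  obtain ⟨hWpart, hW5, hW12, hWthird, hWdisj⟩ := hW
  obtain ⟨A, hA, hA5, hAs, hAE⟩ := h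
  have hz : 0 < z := Nat.pos_of_ne_zero fun h0 => hz3 (h0 ▸ dvd_zero 3)
  have hAE' := hAE.mono_left (Finset.erase_subset (3 * z) A)
  refine ⟨(A.erase (3 * z)).image (3 * ·) ∪ W.image (z * ·), ?_, ?_, ?_, ?_⟩
  · have hm := hA.le_of_mem hAs
    have := ((hA.erase hAs).image_mul three_pos).union (hWpart.image_mul hz)
      (disjoint_image_mul three_pos hAE' (div_mem_image_mul_of_dvd Nat.prime_three hz3 hWthird))
    convert this using 1
    · push_cast
      field_simp
      ring
    · rw [Nat.mul_sub, mul_add, mul_comm z d]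
      omega
  · intro x hx
    rcases Finset.mem_union.mp hx with hx | hx
    · exact not_dvd_of_mem_image_mul Nat.prime_five (by norm_num)
        (fun a ha => hA5 a (Finset.mem_of_mem_erase ha)) x hx
    · exact not_dvd_of_mem_image_mul Nat.prime_five hz5 hW5 x hx
  · exact Finset.mem_union_right _ (Finset.mem_image.mpr ⟨12, hW12, by ring⟩)
  · have himage : levelExcluded.image (4 * z * ·) =
        (levelExcluded.image (4 * ·)).image (z * ·) := by
      rw [Finset.image_image]
      congr 1
      funext b
      simp only [Function.comp_apply]
      ring
    rw [himage, Finset.disjoint_union_left]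
    exact ⟨disjoint_image_mul three_pos hAE'
        (div_mem_image_mul_of_dvd Nat.prime_three hz3 levelExcluded_image_four_mul_third_mem),
      (Finset.disjoint_image (mul_right_injective₀ hz.ne')).mpr hWdisj⟩

def baseCertificates : List (List ℕ) := [
  [6, 12, 16, 18, 42, 56, 72, 84, 112], [6, 14, 16, 27, 42, 48, 54, 56, 72, 84],
  [6, 12, 14, 24, 42, 48, 54, 108, 112], [6, 12, 24, 27, 32, 42, 54, 56, 72, 96],
  [6, 18, 21, 24, 27, 28, 48, 54, 84, 112], [6, 18, 21, 24, 28, 32, 36, 54, 96, 108],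
  [6, 14, 21, 27, 28, 42, 48, 54, 72, 112], [6, 16, 18, 27, 28, 36, 54, 56, 72, 112],
  [6, 12, 18, 24, 28, 32, 84, 96, 126], [6, 12, 16, 21, 36, 48, 54, 108, 126],
  [6, 12, 14, 28, 32, 42, 72, 96, 126], [6, 14, 18, 27, 32, 42, 54, 56, 84, 96],
  [6, 14, 16, 32, 36, 42, 48, 56, 84, 96], [6, 12, 14, 21, 48, 54, 56, 108, 112],
  [6, 7, 21, 27, 56, 72, 81, 162], [6, 16, 18, 21, 36, 42, 48, 54, 84, 108],
  [6, 14, 21, 27, 28, 32, 54, 72, 84, 96], [6, 16, 18, 21, 32, 42, 48, 72, 84, 96],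
  [6, 12, 14, 24, 36, 54, 56, 108, 126], [6, 14, 21, 24, 28, 42, 54, 56, 84, 108],
  [6, 14, 16, 28, 36, 48, 54, 56, 72, 108], [6, 14, 18, 27, 32, 36, 54, 72, 84, 96],
  [6, 14, 21, 27, 28, 36, 54, 56, 72, 126], [6, 12, 16, 21, 28, 54, 84, 108, 112],
  [6, 14, 18, 24, 36, 42, 54, 56, 84, 108], [6, 16, 18, 27, 28, 36, 48, 54, 84, 126],
  [6, 14, 18, 24, 32, 42, 56, 72, 84, 96], [6, 12, 21, 28, 36, 42, 48, 56, 84, 112],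
  [6, 12, 21, 27, 32, 42, 54, 72, 84, 96], [6, 14, 21, 24, 28, 36, 54, 72, 84, 108],
  [6, 14, 18, 28, 32, 36, 54, 56, 96, 108], [6, 14, 16, 27, 32, 48, 54, 72, 84, 96],
  [6, 12, 16, 36, 42, 48, 54, 56, 72, 108], [6, 7, 28, 36, 54, 56, 72, 84, 108],
  [6, 14, 16, 24, 42, 48, 54, 56, 84, 108], [6, 7, 32, 36, 42, 54, 72, 96, 108],
  [6, 14, 21, 24, 27, 42, 54, 56, 84, 126], [6, 12, 21, 28, 32, 42, 54, 56, 96, 108],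
  [6, 14, 16, 18, 24, 56, 84, 112, 126], [6, 14, 21, 24, 28, 42, 48, 54, 108, 112],
  [6, 21, 24, 27, 28, 32, 42, 54, 56, 72, 96], [6, 12, 21, 24, 36, 42, 54, 72, 84, 108],
  [6, 12, 18, 32, 36, 42, 54, 56, 96, 108], [6, 7, 28, 42, 48, 54, 56, 108, 112],
  [6, 14, 16, 24, 36, 48, 54, 72, 84, 108], [6, 18, 24, 27, 32, 36, 42, 54, 56, 72, 96],
  [6, 12, 21, 27, 28, 48, 54, 72, 84, 112], [6, 12, 21, 28, 32, 36, 54, 72, 96, 108],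
  [6, 12, 14, 18, 54, 56, 72, 108, 126], [6, 14, 21, 24, 28, 32, 54, 84, 96, 108],
  [6, 7, 27, 36, 54, 56, 72, 84, 126], [6, 12, 18, 27, 36, 48, 54, 72, 84, 112],
  [6, 12, 16, 32, 42, 48, 54, 56, 96, 108], [6, 7, 28, 32, 54, 56, 84, 96, 108],
  [6, 14, 18, 24, 32, 36, 54, 84, 96, 108], [6, 16, 24, 27, 32, 42, 48, 54, 56, 72, 96],
  [6, 12, 18, 24, 42, 48, 56, 72, 84, 112], [6, 14, 18, 21, 32, 48, 56, 72, 96, 112],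
  [6, 12, 14, 18, 48, 56, 84, 112, 126], [6, 14, 21, 24, 28, 36, 48, 72, 84, 144],
  [6, 12, 18, 28, 36, 48, 54, 56, 108, 112], [6, 12, 21, 24, 32, 42, 54, 84, 96, 108],
  [6, 12, 16, 32, 36, 48, 54, 72, 96, 108], [6, 18, 24, 27, 28, 36, 48, 54, 56, 72, 112],
  [6, 14, 16, 24, 32, 48, 54, 84, 96, 108], [6, 16, 18, 21, 28, 36, 54, 84, 108, 112],
  [6, 12, 14, 36, 42, 54, 56, 72, 84, 108], [6, 16, 18, 21, 28, 32, 72, 84, 96, 112],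
  [6, 21, 24, 27, 28, 36, 42, 48, 54, 56, 144], [6, 16, 21, 28, 36, 42, 48, 54, 56, 72, 108],
  [6, 18, 21, 27, 32, 36, 42, 54, 72, 84, 96], [6, 12, 18, 27, 32, 48, 54, 84, 96, 112],
  [6, 12, 16, 28, 42, 48, 56, 72, 84, 126], [6, 7, 28, 32, 48, 54, 96, 108, 112],
  [6, 12, 16, 32, 36, 42, 56, 84, 96, 112], [6, 7, 28, 32, 42, 72, 84, 96, 126],
  [6, 14, 16, 24, 36, 42, 56, 72, 84, 144], [6, 14, 16, 21, 36, 54, 56, 72, 108, 112],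
  [6, 18, 21, 27, 28, 42, 48, 54, 56, 84, 112], [6, 18, 21, 28, 32, 36, 42, 54, 56, 96, 108],
  [6, 16, 21, 27, 32, 42, 48, 54, 72, 84, 96], [6, 14, 16, 27, 36, 42, 48, 54, 112, 144],
  [6, 12, 16, 28, 36, 54, 56, 72, 108, 112], [6, 18, 24, 27, 28, 32, 48, 54, 56, 96, 112],
  [6, 12, 18, 24, 36, 48, 54, 84, 108, 112], [6, 7, 24, 32, 56, 72, 84, 96, 126],
  [6, 12, 14, 32, 42, 54, 56, 84, 96, 108], [6, 14, 18, 21, 32, 36, 72, 84, 96, 126],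
  [6, 18, 21, 27, 28, 36, 48, 54, 72, 84, 112], [6, 14, 24, 27, 32, 42, 54, 56, 72, 84, 96],
  [6, 7, 27, 32, 48, 54, 96, 112, 126], [6, 14, 16, 27, 28, 42, 54, 84, 112, 126],
  [6, 12, 18, 28, 32, 36, 72, 84, 96, 126], [6, 16, 21, 24, 36, 42, 48, 54, 72, 84, 108],
  [6, 16, 18, 32, 36, 42, 48, 54, 56, 96, 108], [6, 14, 16, 21, 36, 48, 54, 84, 108, 126],
  [6, 12, 14, 32, 36, 54, 72, 84, 96, 108], [6, 14, 16, 21, 32, 54, 56, 96, 108, 112],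
  [6, 18, 21, 27, 28, 42, 48, 54, 56, 72, 144], [6, 16, 21, 28, 32, 36, 48, 54, 72, 96, 108],
  [6, 16, 21, 27, 28, 42, 54, 56, 72, 84, 112], [6, 14, 16, 24, 27, 54, 56, 84, 112, 126],
  [6, 12, 16, 28, 32, 54, 56, 96, 108, 112], [6, 14, 21, 28, 36, 42, 54, 56, 72, 84, 108],
  [6, 12, 14, 28, 48, 54, 56, 84, 108, 112], [6, 16, 18, 27, 36, 42, 54, 56, 72, 84, 112],
  [6, 12, 16, 24, 36, 54, 72, 84, 108, 112], [6, 14, 24, 27, 28, 48, 54, 56, 72, 84, 112],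
  [6, 14, 24, 28, 32, 36, 54, 56, 72, 96, 108], [6, 14, 24, 27, 32, 42, 48, 54, 72, 96, 112],
  [6, 14, 16, 28, 32, 36, 48, 84, 96, 168], [6, 16, 21, 28, 32, 36, 42, 56, 84, 96, 112],
  [6, 12, 18, 24, 32, 48, 56, 96, 112, 126], [6, 16, 21, 24, 32, 42, 48, 54, 84, 96, 108],
  [6, 16, 18, 28, 36, 42, 48, 56, 72, 84, 126], [6, 14, 27, 28, 32, 36, 42, 54, 72, 96, 126],
  [6, 16, 21, 27, 32, 36, 48, 54, 72, 96, 126], [6, 12, 18, 21, 36, 48, 72, 84, 112, 126],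
  [6, 14, 16, 36, 42, 48, 54, 56, 72, 84, 108], [6, 12, 24, 27, 42, 48, 54, 56, 72, 84, 112],
  [6, 12, 24, 32, 36, 42, 54, 56, 72, 96, 108], [6, 18, 21, 24, 28, 36, 48, 54, 84, 108, 112],
  [6, 12, 14, 32, 36, 54, 56, 96, 108, 126], [6, 14, 21, 28, 32, 42, 54, 56, 84, 96, 108],
  [6, 12, 16, 28, 32, 42, 72, 96, 112, 126], [6, 12, 27, 28, 32, 48, 54, 56, 72, 96, 112],
  [6, 12, 16, 24, 32, 54, 84, 96, 108, 112], [6, 12, 18, 21, 32, 54, 72, 96, 108, 126],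
  [6, 14, 18, 32, 36, 42, 54, 56, 84, 96, 108], [6, 18, 21, 24, 28, 36, 48, 56, 72, 112, 126],
  [6, 12, 24, 32, 36, 42, 48, 56, 84, 96, 112], [6, 16, 21, 28, 32, 36, 42, 56, 72, 96, 144],
  [6, 12, 16, 24, 36, 54, 56, 108, 112, 126], [6, 14, 21, 28, 32, 36, 54, 72, 84, 96, 108],
  [6, 16, 18, 28, 32, 42, 48, 56, 84, 96, 126], [6, 16, 18, 27, 32, 36, 54, 72, 84, 96, 112],
  [6, 16, 21, 27, 28, 36, 54, 56, 72, 112, 126], [6, 12, 18, 21, 32, 48, 84, 96, 112, 126],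
  [6, 14, 16, 32, 42, 48, 54, 56, 84, 96, 108], [6, 14, 18, 21, 24, 54, 56, 108, 112, 144],
  [6, 16, 18, 24, 32, 42, 56, 72, 84, 96, 112], [6, 18, 21, 24, 28, 36, 48, 54, 72, 108, 144],
  [6, 14, 16, 18, 32, 56, 84, 96, 112, 126], [6, 16, 21, 24, 28, 36, 54, 72, 84, 108, 112],
  [6, 16, 18, 28, 32, 36, 54, 56, 96, 108, 112], [6, 12, 21, 32, 36, 42, 54, 72, 84, 96, 108],
  [6, 14, 18, 28, 36, 48, 54, 56, 84, 108, 112], [6, 14, 24, 27, 28, 42, 48, 54, 84, 112, 126],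
  [6, 14, 16, 32, 36, 48, 54, 72, 84, 96, 108], [6, 12, 24, 27, 32, 48, 54, 72, 84, 96, 112],
  [6, 14, 21, 27, 32, 36, 54, 72, 84, 96, 126], [6, 7, 36, 42, 48, 54, 72, 84, 108, 112],
  [6, 12, 14, 32, 36, 48, 56, 96, 126, 144], [6, 12, 21, 28, 42, 48, 54, 56, 84, 108, 112],
  [6, 14, 16, 18, 32, 54, 84, 96, 108, 144], [6, 12, 27, 28, 32, 36, 54, 72, 84, 96, 126],
  [6, 21, 24, 27, 28, 42, 48, 54, 56, 72, 84, 112],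
  [6, 21, 24, 28, 32, 36, 42, 54, 56, 72, 96, 108], [6, 12, 18, 36, 42, 48, 54, 56, 84, 108, 112],
  [6, 14, 21, 28, 32, 36, 54, 56, 96, 108, 126], [6, 12, 18, 32, 42, 48, 56, 72, 84, 96, 112],
  [6, 18, 24, 27, 36, 42, 48, 54, 56, 72, 84, 112], [6, 12, 16, 18, 54, 56, 72, 108, 112, 126],
  [6, 12, 21, 28, 36, 48, 54, 72, 84, 108, 112], [6, 12, 14, 28, 42, 48, 54, 108, 126, 144],
  [6, 12, 27, 28, 32, 42, 48, 54, 96, 112, 126], [6, 16, 18, 24, 28, 48, 54, 72, 84, 108, 126],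
  [6, 18, 27, 28, 32, 36, 48, 54, 56, 72, 96, 112], [6, 14, 16, 28, 36, 54, 56, 72, 84, 108, 112],
  [6, 16, 21, 24, 28, 36, 54, 56, 108, 112, 126], [6, 14, 16, 32, 36, 42, 54, 72, 96, 108, 112],
  [6, 7, 32, 42, 48, 54, 84, 96, 108, 112], [6, 16, 24, 32, 36, 42, 48, 54, 56, 72, 96, 108],
  [6, 14, 21, 24, 28, 48, 56, 72, 84, 112, 126], [6, 21, 24, 27, 32, 36, 42, 54, 56, 72, 96, 126],
  [6, 12, 24, 27, 32, 48, 54, 56, 96, 112, 126], [6, 16, 18, 24, 32, 36, 56, 72, 96, 112, 126],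
  [6, 16, 27, 28, 36, 42, 48, 54, 56, 72, 84, 126], [6, 14, 18, 28, 32, 42, 54, 72, 96, 108, 126],
  [6, 16, 18, 21, 32, 48, 54, 72, 96, 108, 126], [6, 12, 16, 36, 42, 54, 56, 72, 84, 108, 112],
  [6, 18, 24, 27, 32, 42, 48, 54, 56, 84, 96, 112], [6, 14, 16, 21, 24, 56, 81, 108, 112, 162],
  [6, 12, 21, 28, 32, 48, 54, 84, 96, 108, 112], [6, 12, 16, 18, 48, 54, 84, 108, 112, 144],
  [6, 12, 21, 24, 42, 48, 56, 72, 84, 112, 126], [6, 21, 24, 27, 28, 32, 48, 54, 72, 84, 96, 112],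
  [6, 18, 27, 28, 32, 36, 42, 54, 56, 84, 96, 126], [6, 12, 18, 32, 36, 48, 54, 84, 96, 108, 112],
  [6, 12, 21, 28, 36, 48, 54, 56, 108, 112, 126], [6, 14, 18, 24, 36, 48, 54, 72, 84, 108, 144],
  [6, 18, 24, 27, 32, 36, 48, 54, 72, 84, 96, 112],
  [6, 21, 24, 27, 28, 36, 48, 54, 56, 72, 112, 126], [6, 16, 21, 24, 28, 32, 48, 84, 96, 112, 144],
  [6, 18, 21, 24, 28, 32, 36, 81, 96, 108, 162], [6, 18, 21, 28, 36, 42, 48, 54, 56, 84, 108, 112],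
  [6, 12, 18, 32, 36, 48, 56, 72, 96, 112, 126], [6, 16, 21, 32, 36, 42, 48, 54, 72, 84, 96, 108],
  [6, 14, 18, 24, 32, 48, 56, 84, 96, 112, 126], [6, 16, 18, 21, 28, 54, 56, 72, 108, 112, 126],
  [6, 18, 24, 28, 32, 36, 48, 54, 56, 96, 108, 112], [6, 16, 18, 21, 32, 36, 72, 84, 96, 112, 126],
  [6, 18, 24, 28, 32, 36, 42, 56, 72, 84, 96, 126],
  [6, 16, 24, 27, 32, 42, 54, 56, 72, 84, 96, 112], [6, 16, 18, 21, 36, 42, 48, 81, 84, 108, 162],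
  [6, 14, 16, 27, 32, 54, 56, 84, 96, 112, 126], [6, 14, 24, 32, 36, 42, 54, 56, 72, 84, 96, 108],
  [6, 16, 27, 28, 32, 36, 48, 54, 72, 84, 96, 126], [6, 12, 18, 28, 42, 48, 54, 72, 108, 112, 126],
  [6, 12, 18, 27, 42, 54, 56, 72, 84, 112, 144], [6, 12, 16, 32, 36, 54, 72, 84, 96, 108, 112],
  [6, 14, 27, 28, 32, 48, 54, 56, 72, 84, 96, 112],
  [6, 16, 24, 28, 32, 42, 48, 56, 72, 84, 96, 126], [6, 14, 18, 21, 32, 54, 72, 84, 96, 108, 126],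
  [6, 16, 18, 27, 28, 36, 48, 81, 84, 126, 162], [6, 12, 21, 24, 32, 48, 72, 84, 96, 112, 126],
  [6, 21, 24, 27, 28, 36, 42, 54, 56, 84, 112, 144],
  [6, 16, 21, 28, 36, 42, 54, 56, 72, 84, 108, 112], [6, 12, 18, 28, 32, 54, 72, 84, 96, 108, 126],
  [6, 14, 18, 28, 32, 36, 56, 81, 96, 108, 162], [6, 14, 16, 24, 32, 56, 72, 84, 96, 112, 126],
  [6, 14, 27, 32, 36, 42, 48, 54, 56, 84, 96, 144],
  [6, 16, 24, 28, 32, 36, 54, 56, 72, 96, 108, 112],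
  [6, 12, 27, 32, 42, 48, 54, 56, 72, 84, 96, 112],
  [6, 14, 24, 28, 36, 48, 54, 56, 72, 84, 108, 112],
  [6, 18, 21, 28, 32, 36, 48, 54, 84, 96, 108, 112],
  [6, 14, 24, 32, 36, 42, 48, 54, 72, 96, 108, 112],
  [6, 18, 21, 24, 36, 42, 48, 56, 72, 84, 112, 126],
  [6, 12, 18, 28, 36, 54, 56, 72, 108, 112, 144],
  [6, 16, 27, 28, 32, 36, 42, 54, 72, 96, 112, 126], [6, 12, 16, 32, 42, 48, 56, 84, 96, 112, 144],
  [6, 14, 27, 28, 36, 42, 48, 54, 72, 84, 112, 126], [6, 14, 16, 24, 32, 54, 72, 84, 96, 108, 144],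
  [6, 18, 21, 28, 32, 36, 48, 56, 72, 96, 112, 126],
  [6, 16, 21, 27, 36, 42, 54, 56, 72, 84, 112, 126],
  [6, 18, 21, 28, 32, 42, 48, 54, 56, 96, 108, 144],
  [6, 12, 24, 36, 42, 48, 54, 56, 72, 84, 108, 112],
  [6, 14, 21, 32, 36, 48, 54, 56, 72, 96, 108, 112],
  [6, 12, 14, 36, 48, 54, 56, 84, 108, 112, 126],
  [6, 16, 24, 27, 32, 36, 54, 56, 72, 96, 112, 126],
  [6, 16, 18, 28, 42, 48, 54, 56, 72, 84, 108, 126],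
  [6, 14, 24, 27, 36, 48, 54, 56, 72, 84, 112, 126],
  [6, 12, 28, 32, 36, 48, 54, 56, 72, 96, 108, 112],
  [6, 12, 18, 21, 48, 54, 72, 84, 108, 112, 126],
  [6, 14, 24, 28, 32, 48, 54, 56, 84, 96, 108, 112],
  [6, 18, 21, 28, 32, 36, 48, 54, 72, 96, 108, 144],
  [6, 18, 21, 27, 28, 42, 54, 56, 72, 84, 112, 144],
  [6, 16, 21, 28, 32, 36, 54, 72, 84, 96, 108, 112],
  [6, 14, 16, 18, 54, 56, 72, 84, 108, 112, 126],
  [6, 18, 24, 27, 28, 36, 48, 54, 72, 84, 126, 144], [6, 12, 18, 27, 32, 54, 72, 81, 96, 108, 162],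
  [6, 14, 27, 28, 32, 42, 48, 54, 84, 96, 112, 126], [6, 12, 14, 32, 48, 54, 72, 84, 96, 108, 144],
  [6, 14, 16, 21, 42, 54, 56, 84, 108, 126, 144],
  [6, 16, 21, 27, 32, 42, 54, 56, 84, 96, 112, 126],
  [6, 18, 21, 24, 28, 48, 54, 56, 72, 108, 112, 126],
  [6, 12, 24, 32, 42, 48, 54, 56, 84, 96, 108, 112],
  [6, 14, 21, 32, 36, 42, 54, 56, 84, 96, 108, 126],
  [6, 12, 14, 36, 48, 54, 56, 72, 108, 126, 144],
  [6, 12, 27, 32, 36, 48, 54, 56, 72, 96, 112, 126],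
  [6, 21, 27, 28, 32, 42, 48, 54, 56, 72, 84, 96, 112],
  [6, 14, 24, 27, 32, 48, 54, 56, 84, 96, 112, 126],
  [6, 12, 28, 32, 36, 42, 54, 56, 84, 96, 108, 126],
  [6, 14, 16, 21, 36, 54, 72, 84, 108, 126, 144],
  [6, 16, 21, 27, 32, 36, 54, 72, 84, 96, 112, 126],
  [6, 18, 27, 32, 36, 42, 48, 54, 56, 72, 84, 96, 112],
  [6, 12, 24, 32, 36, 48, 54, 72, 84, 96, 108, 112],
  [6, 16, 21, 24, 36, 42, 54, 56, 84, 108, 112, 126],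
  [6, 12, 16, 28, 36, 54, 72, 84, 108, 126, 144],
  [6, 16, 21, 24, 32, 42, 56, 72, 84, 96, 112, 126],
  [6, 16, 18, 28, 32, 48, 54, 72, 84, 96, 108, 126],
  [6, 14, 27, 28, 32, 36, 54, 56, 84, 96, 112, 144],
  [6, 16, 18, 32, 36, 42, 48, 56, 84, 96, 112, 144],
  [6, 21, 24, 28, 36, 42, 48, 54, 56, 72, 84, 108, 112],
  [6, 12, 14, 32, 42, 54, 72, 96, 108, 112, 144],
  [6, 14, 21, 28, 36, 48, 54, 56, 84, 108, 112, 126],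
  [6, 12, 24, 32, 42, 48, 54, 56, 72, 96, 108, 144],
  [6, 14, 21, 28, 32, 48, 56, 72, 84, 96, 112, 126],
  [6, 12, 14, 32, 48, 54, 56, 96, 108, 126, 144],
  [6, 18, 21, 24, 28, 42, 54, 56, 84, 108, 112, 144],
  [6, 16, 18, 28, 36, 48, 54, 56, 72, 108, 112, 144],
  [6, 16, 21, 24, 32, 42, 54, 72, 84, 96, 108, 144],
  [6, 14, 18, 32, 36, 48, 56, 72, 84, 96, 112, 126],
  [6, 12, 27, 32, 36, 42, 54, 56, 84, 96, 112, 144],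
  [6, 14, 18, 32, 42, 48, 54, 56, 84, 96, 108, 144],
  [6, 24, 27, 28, 32, 36, 42, 48, 54, 72, 96, 112, 126],
  [6, 14, 24, 28, 32, 36, 56, 72, 84, 96, 112, 144],
  [6, 12, 21, 36, 42, 48, 54, 56, 84, 108, 112, 126],
  [6, 12, 16, 28, 32, 54, 84, 96, 108, 126, 144],
  [6, 12, 21, 32, 42, 48, 56, 72, 84, 96, 112, 126],
  [6, 21, 24, 27, 36, 42, 48, 54, 56, 72, 84, 112, 126],
  [6, 16, 18, 27, 32, 48, 54, 72, 84, 96, 112, 144],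
  [6, 12, 24, 32, 36, 48, 54, 56, 96, 108, 112, 126],
  [6, 21, 24, 28, 32, 42, 48, 54, 56, 84, 96, 108, 112],
  [6, 14, 18, 28, 42, 48, 54, 72, 84, 108, 112, 126],
  [6, 14, 21, 28, 36, 48, 54, 56, 72, 108, 126, 144],
  [6, 21, 27, 28, 32, 36, 48, 54, 56, 72, 96, 112, 126],
  [6, 16, 18, 21, 42, 54, 56, 72, 84, 108, 112, 126],
  [6, 18, 24, 32, 36, 42, 48, 54, 56, 84, 96, 108, 112],
  [6, 16, 21, 24, 28, 48, 54, 72, 84, 108, 112, 144],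
  [6, 16, 18, 28, 32, 48, 54, 56, 96, 108, 112, 144],
  [6, 12, 21, 32, 42, 48, 54, 72, 84, 96, 108, 144],
  [6, 16, 18, 24, 32, 54, 56, 72, 96, 108, 112, 126],
  [6, 21, 24, 28, 32, 36, 48, 54, 72, 84, 96, 108, 112],
  [6, 14, 18, 24, 48, 54, 56, 72, 84, 108, 112, 126],
  [6, 12, 18, 21, 32, 72, 84, 96, 112, 126, 144],
  [6, 14, 16, 32, 42, 54, 56, 72, 84, 96, 108, 144],
  [6, 12, 21, 36, 42, 48, 54, 56, 72, 108, 126, 144],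
  [6, 12, 24, 27, 42, 48, 56, 72, 81, 84, 112, 162],
  [6, 18, 21, 24, 28, 32, 54, 84, 96, 108, 112, 144],
  [6, 21, 24, 27, 32, 42, 48, 54, 56, 84, 96, 112, 126],
  [6, 14, 21, 28, 32, 42, 54, 72, 96, 108, 112, 144],
  [6, 12, 14, 28, 42, 54, 84, 108, 112, 126, 144],
  [6, 21, 24, 28, 32, 42, 48, 54, 56, 72, 96, 108, 144],
  [6, 16, 28, 32, 36, 42, 48, 54, 56, 84, 96, 108, 126],
  [6, 14, 21, 28, 32, 48, 54, 56, 96, 108, 126, 144],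
  [6, 14, 18, 32, 36, 42, 54, 72, 96, 108, 112, 144],
  [6, 12, 21, 32, 36, 48, 54, 84, 96, 108, 112, 126],
  [6, 18, 24, 32, 36, 42, 48, 54, 56, 72, 96, 108, 144],
  [6, 14, 21, 24, 36, 48, 54, 72, 84, 108, 126, 144],
  [6, 16, 24, 32, 36, 42, 54, 56, 72, 84, 96, 108, 112],
  [6, 12, 21, 28, 42, 54, 56, 72, 84, 108, 112, 144],
  [6, 12, 18, 32, 48, 54, 56, 72, 96, 108, 112, 126],
  [6, 18, 27, 28, 36, 42, 48, 54, 56, 72, 84, 126, 144],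
  [6, 14, 16, 28, 48, 54, 56, 72, 84, 108, 112, 144],
  [6, 16, 21, 24, 28, 48, 54, 56, 108, 112, 126, 144],
  [6, 12, 18, 36, 42, 54, 56, 72, 84, 108, 112, 144],
  [6, 16, 18, 21, 32, 54, 72, 84, 96, 108, 112, 126],
  [6, 14, 28, 32, 36, 48, 54, 56, 72, 84, 96, 108, 112],
  [6, 21, 24, 28, 32, 36, 48, 54, 56, 96, 108, 112, 126],
  [6, 21, 24, 27, 32, 42, 48, 54, 56, 72, 96, 126, 144],
  [6, 18, 21, 32, 36, 42, 48, 56, 72, 84, 96, 112, 126],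
  [6, 16, 18, 24, 32, 48, 56, 72, 96, 112, 126, 144],
  [6, 12, 27, 28, 32, 42, 54, 72, 96, 112, 126, 144],
  [6, 14, 18, 28, 32, 54, 56, 84, 96, 108, 112, 144],
  [6, 16, 27, 32, 36, 42, 48, 54, 56, 84, 96, 112, 144],
  [6, 12, 16, 42, 48, 54, 56, 72, 84, 108, 112, 144],
  [6, 12, 21, 32, 36, 48, 54, 72, 96, 108, 126, 144],
  [6, 12, 21, 27, 42, 54, 56, 72, 84, 112, 126, 144],
  [6, 7, 32, 42, 54, 72, 84, 96, 108, 112, 144],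
  [6, 12, 32, 36, 42, 48, 54, 56, 72, 84, 96, 108, 112],
  [6, 14, 16, 27, 48, 54, 56, 72, 84, 112, 126, 144],
  [6, 14, 16, 32, 36, 54, 56, 72, 96, 108, 126, 144],
  [6, 18, 21, 32, 36, 42, 48, 54, 72, 84, 96, 108, 144],
  [6, 12, 24, 28, 32, 48, 54, 84, 96, 108, 126, 144],
  [6, 14, 27, 32, 36, 48, 54, 56, 72, 84, 96, 112, 126],
  [6, 12, 18, 32, 42, 54, 56, 84, 96, 108, 112, 144],
  [6, 12, 18, 36, 42, 48, 56, 81, 84, 108, 112, 162],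
  [6, 18, 24, 28, 32, 42, 48, 54, 72, 96, 108, 112, 126],
  [6, 18, 24, 27, 32, 42, 54, 56, 72, 84, 96, 112, 144],
  [6, 16, 24, 32, 36, 42, 48, 56, 72, 84, 96, 112, 144],
  [6, 12, 21, 28, 32, 54, 72, 84, 96, 108, 112, 144],
  [6, 14, 16, 32, 36, 48, 56, 84, 96, 112, 126, 144],
  [6, 18, 21, 24, 42, 48, 54, 56, 72, 84, 108, 112, 126],
  [6, 14, 18, 28, 36, 42, 54, 84, 108, 112, 126, 144],
  [6, 16, 18, 21, 36, 48, 54, 84, 108, 112, 126, 144],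
  [6, 12, 18, 32, 36, 54, 72, 84, 96, 108, 112, 144],
  [6, 16, 18, 21, 32, 48, 72, 84, 96, 112, 126, 144],
  [6, 18, 24, 28, 32, 42, 48, 56, 72, 84, 96, 126, 144],
  [6, 18, 21, 28, 32, 48, 54, 56, 72, 96, 108, 112, 126],
  [6, 18, 24, 27, 32, 42, 54, 56, 72, 81, 96, 108, 162],
  [6, 14, 21, 24, 32, 42, 54, 96, 108, 112, 126, 144],
  [6, 14, 24, 32, 42, 48, 54, 56, 72, 84, 96, 108, 144],
  [6, 18, 21, 28, 36, 42, 54, 56, 72, 84, 108, 112, 144],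
  [6, 14, 16, 28, 42, 48, 54, 84, 108, 112, 126, 144],
  [6, 16, 27, 28, 32, 42, 54, 56, 72, 84, 96, 126, 144],
  [6, 12, 16, 32, 48, 54, 72, 84, 96, 108, 112, 144],
  [6, 14, 18, 28, 32, 42, 72, 81, 96, 108, 126, 162],
  [6, 14, 28, 32, 36, 42, 48, 54, 84, 96, 108, 112, 126],
  [6, 18, 21, 32, 36, 42, 48, 54, 56, 96, 108, 126, 144],
  [6, 18, 24, 27, 32, 42, 48, 56, 81, 84, 96, 112, 162],
  [6, 16, 21, 32, 36, 42, 54, 56, 84, 96, 108, 112, 126],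
  [6, 12, 16, 36, 48, 54, 56, 72, 108, 112, 126, 144],
  [6, 16, 21, 28, 42, 48, 54, 56, 72, 84, 108, 112, 144],
  [6, 14, 16, 24, 48, 54, 56, 84, 108, 112, 126, 144],
  [6, 18, 27, 28, 32, 36, 42, 54, 72, 96, 112, 126, 144],
  [6, 18, 27, 28, 32, 36, 42, 56, 81, 84, 96, 126, 162],
  [6, 21, 28, 32, 36, 42, 48, 54, 56, 72, 84, 96, 108, 112],
  [6, 14, 24, 32, 36, 48, 54, 56, 84, 96, 108, 112, 126],
  [6, 12, 21, 27, 32, 54, 72, 81, 96, 108, 126, 162],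
  [6, 18, 21, 27, 36, 42, 54, 56, 72, 84, 112, 126, 144],
  [6, 12, 21, 24, 36, 54, 72, 84, 108, 112, 126, 144],
  [6, 12, 18, 32, 36, 54, 56, 96, 108, 112, 126, 144],
  [6, 18, 21, 24, 32, 48, 54, 72, 84, 96, 108, 112, 126],
  [6, 18, 21, 28, 36, 42, 48, 56, 81, 84, 108, 112, 162],
  [6, 16, 27, 28, 32, 42, 48, 54, 72, 96, 112, 126, 144],
  [6, 18, 24, 28, 32, 36, 48, 54, 84, 96, 108, 126, 144],
  [6, 12, 18, 32, 42, 48, 56, 81, 96, 108, 144, 162],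
  [6, 14, 28, 32, 36, 42, 48, 54, 72, 96, 108, 126, 144],
  [6, 18, 24, 28, 32, 36, 48, 56, 81, 96, 108, 112, 162],
  [6, 16, 21, 27, 42, 48, 54, 56, 72, 84, 112, 126, 144],
  [6, 16, 21, 32, 36, 42, 54, 56, 72, 96, 108, 126, 144],
  [6, 12, 16, 32, 48, 54, 56, 96, 108, 112, 126, 144],
  [6, 18, 21, 28, 32, 36, 54, 72, 84, 96, 108, 112, 144],
  [6, 21, 27, 32, 36, 42, 48, 54, 56, 72, 84, 96, 112, 126],
  [6, 16, 24, 27, 32, 48, 54, 56, 72, 96, 112, 126, 144],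
  [6, 16, 27, 28, 32, 36, 54, 56, 81, 96, 108, 112, 162],
  [6, 12, 18, 28, 42, 48, 72, 81, 108, 112, 126, 162],
  [6, 16, 18, 32, 42, 48, 54, 56, 84, 96, 108, 112, 144],
  [6, 12, 16, 32, 36, 72, 81, 84, 96, 108, 112, 162],
  [6, 18, 21, 27, 32, 42, 54, 56, 84, 96, 112, 126, 144],
  [6, 16, 21, 32, 36, 42, 48, 56, 84, 96, 112, 126, 144],
  [6, 14, 18, 21, 32, 72, 81, 84, 96, 108, 126, 162],
  [6, 16, 21, 28, 32, 48, 54, 72, 84, 96, 108, 112, 144],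
  [6, 18, 21, 28, 36, 42, 48, 56, 72, 81, 108, 144, 162],
  [6, 21, 24, 27, 28, 36, 42, 56, 81, 84, 112, 144, 162],
  [6, 12, 14, 36, 54, 56, 72, 84, 108, 112, 126, 144],
  [6, 12, 18, 28, 32, 72, 81, 84, 96, 108, 126, 162],
  [6, 14, 18, 32, 48, 54, 56, 72, 84, 96, 108, 112, 126],
  [6, 16, 21, 28, 36, 48, 54, 56, 72, 108, 112, 126, 144],
  [6, 18, 21, 27, 32, 36, 54, 72, 84, 96, 112, 126, 144],
  [6, 16, 24, 28, 32, 36, 56, 72, 81, 96, 108, 112, 162],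
  [6, 14, 24, 28, 32, 54, 56, 72, 84, 96, 108, 112, 144],
  [6, 14, 21, 32, 42, 48, 54, 56, 84, 96, 108, 126, 144],
  [6, 18, 21, 28, 32, 36, 48, 81, 84, 96, 108, 112, 162],
  [6, 18, 21, 24, 32, 42, 56, 72, 84, 96, 112, 126, 144],
  [6, 18, 24, 28, 32, 36, 48, 54, 72, 96, 108, 144, 168],
  [6, 12, 18, 28, 36, 56, 72, 81, 108, 112, 144, 162],
  [6, 12, 28, 32, 42, 48, 54, 56, 84, 96, 108, 126, 144],
  [6, 14, 27, 28, 32, 42, 54, 72, 84, 96, 112, 126, 144],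
  [6, 16, 21, 27, 32, 48, 54, 72, 84, 96, 112, 126, 144],
  [6, 24, 27, 28, 32, 42, 48, 54, 56, 72, 84, 96, 126, 144],
  [6, 14, 16, 21, 48, 56, 72, 81, 108, 112, 144, 162],
  [6, 14, 21, 32, 36, 48, 54, 72, 84, 96, 108, 126, 144],
  [6, 12, 24, 32, 42, 54, 56, 72, 84, 96, 108, 112, 144],
  [6, 12, 24, 36, 42, 48, 56, 72, 81, 84, 108, 112, 162],
  [6, 12, 14, 32, 54, 56, 84, 96, 108, 112, 126, 144],
  [6, 21, 24, 32, 36, 42, 48, 54, 56, 84, 96, 108, 112, 126],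
  [6, 12, 28, 32, 36, 48, 54, 72, 84, 96, 108, 126, 144],
  [6, 14, 24, 27, 32, 54, 56, 72, 84, 96, 112, 126, 144],
  [6, 14, 27, 28, 32, 42, 54, 72, 81, 96, 108, 126, 162],
  [6, 12, 28, 32, 36, 48, 56, 72, 81, 96, 108, 112, 162],
  [6, 14, 24, 28, 36, 42, 54, 72, 84, 108, 112, 126, 144],
  [6, 16, 21, 24, 36, 48, 54, 72, 84, 108, 112, 126, 144],
  [6, 16, 18, 32, 36, 48, 54, 56, 96, 108, 112, 126, 144],
  [6, 14, 21, 27, 42, 54, 56, 72, 81, 84, 108, 126, 162],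
  [6, 16, 21, 28, 32, 36, 72, 81, 84, 96, 108, 112, 162],
  [6, 14, 16, 18, 56, 72, 81, 84, 108, 112, 126, 162],
  [6, 14, 27, 28, 32, 48, 54, 56, 81, 96, 108, 144, 162],
  [6, 16, 21, 28, 36, 42, 54, 56, 84, 108, 112, 126, 168],
  [6, 12, 27, 32, 36, 48, 54, 81, 84, 96, 108, 112, 162],
  [6, 12, 14, 32, 48, 72, 81, 84, 96, 108, 144, 162],
  [6, 14, 24, 27, 36, 48, 54, 72, 81, 84, 108, 144, 162],
  [6, 14, 21, 28, 36, 54, 56, 72, 84, 108, 112, 126, 144],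
  [6, 18, 21, 24, 28, 48, 56, 72, 81, 108, 112, 126, 162],
  [6, 14, 21, 32, 36, 42, 54, 72, 96, 108, 112, 126, 144],
  [6, 14, 21, 32, 36, 42, 56, 81, 84, 96, 108, 126, 162],
  [6, 21, 24, 32, 36, 42, 48, 54, 56, 72, 96, 108, 126, 144],
  [6, 12, 27, 32, 36, 48, 56, 72, 81, 96, 112, 126, 162],
  [6, 21, 27, 28, 32, 42, 48, 56, 72, 81, 84, 96, 112, 162],
  [6, 12, 28, 32, 36, 42, 54, 72, 96, 108, 112, 126, 144],
  [6, 12, 28, 32, 36, 42, 56, 81, 84, 96, 108, 126, 162],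
  [6, 14, 24, 28, 32, 42, 54, 84, 96, 108, 112, 126, 144],
  [6, 16, 21, 24, 32, 48, 54, 84, 96, 108, 112, 126, 144],
  [6, 18, 27, 32, 36, 42, 48, 56, 72, 81, 84, 96, 112, 162],
  [6, 12, 21, 36, 42, 54, 56, 72, 84, 108, 112, 126, 144],
  [6, 16, 18, 27, 36, 54, 56, 72, 81, 108, 112, 126, 162],
  [6, 18, 21, 32, 42, 48, 54, 56, 72, 84, 96, 108, 112, 126],
  [6, 14, 16, 36, 48, 54, 56, 72, 84, 108, 112, 126, 144],
  [6, 16, 18, 28, 32, 48, 72, 81, 84, 96, 108, 126, 162],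
  [6, 18, 28, 32, 36, 42, 48, 54, 56, 84, 96, 108, 126, 144],
  [6, 21, 24, 28, 32, 42, 54, 56, 72, 84, 96, 108, 112, 144],
  [6, 21, 24, 28, 36, 42, 48, 56, 72, 81, 84, 108, 112, 162],
  [6, 14, 21, 28, 32, 54, 56, 84, 96, 108, 112, 126, 144],
  [6, 14, 21, 28, 36, 48, 56, 81, 84, 108, 112, 126, 162],
  [6, 14, 21, 27, 32, 54, 72, 81, 84, 96, 108, 126, 162],
  [6, 18, 24, 32, 36, 42, 54, 56, 72, 84, 96, 108, 112, 144],
  [6, 21, 27, 28, 36, 42, 48, 54, 56, 72, 81, 108, 144, 162],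
  [6, 14, 18, 32, 36, 54, 56, 84, 96, 108, 112, 126, 144],
  [6, 16, 18, 28, 36, 48, 56, 72, 81, 108, 112, 144, 162],
  [6, 12, 27, 28, 32, 54, 72, 81, 84, 96, 108, 126, 162],
  [6, 12, 28, 32, 36, 42, 48, 81, 96, 108, 112, 126, 162],
  [6, 12, 27, 32, 36, 42, 56, 81, 84, 96, 112, 144, 162],
  [6, 14, 18, 32, 42, 48, 56, 81, 84, 96, 108, 144, 162],
  [6, 24, 27, 28, 32, 36, 42, 48, 72, 81, 96, 112, 126, 162],
  [6, 12, 21, 32, 42, 54, 56, 84, 96, 108, 112, 126, 144],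
  [6, 16, 24, 32, 42, 48, 54, 56, 72, 84, 96, 108, 112, 144],
  [6, 21, 27, 28, 32, 36, 48, 54, 81, 84, 96, 108, 112, 162],
  [6, 21, 24, 27, 32, 42, 54, 56, 72, 84, 96, 112, 126, 144],
  [6, 21, 24, 27, 36, 42, 48, 56, 72, 81, 84, 112, 126, 162],
  [6, 16, 18, 27, 32, 48, 72, 81, 84, 96, 112, 144, 162],
  [6, 12, 24, 32, 36, 48, 56, 81, 96, 108, 112, 126, 162],
  [6, 16, 28, 32, 36, 42, 54, 56, 72, 84, 96, 108, 126, 144],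
  [6, 14, 18, 28, 42, 48, 72, 81, 84, 108, 112, 126, 162],
  [6, 14, 24, 27, 32, 42, 54, 81, 96, 108, 112, 144, 162],
  [6, 12, 21, 32, 36, 54, 72, 84, 96, 108, 112, 126, 144],
  [6, 16, 18, 21, 42, 56, 72, 81, 84, 108, 112, 126, 162],
  [6, 18, 24, 32, 36, 42, 48, 56, 81, 84, 96, 108, 112, 162],
  [6, 16, 21, 24, 28, 48, 72, 81, 84, 108, 112, 144, 162],
  [6, 21, 24, 27, 32, 42, 54, 56, 72, 81, 96, 108, 126, 162],
  [6, 12, 21, 32, 42, 48, 72, 81, 84, 96, 108, 144, 162],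
  [6, 16, 18, 24, 32, 56, 72, 81, 96, 108, 112, 126, 162],
  [6, 21, 24, 28, 32, 36, 48, 72, 81, 84, 96, 108, 112, 162],
  [6, 14, 18, 24, 48, 56, 72, 81, 84, 108, 112, 126, 162],
  [6, 16, 27, 32, 36, 42, 54, 56, 81, 84, 96, 108, 112, 162],
  [6, 12, 21, 27, 48, 54, 72, 81, 84, 108, 112, 126, 162],
  [6, 12, 21, 36, 42, 48, 56, 72, 81, 108, 126, 144, 162],
  [6, 21, 24, 28, 32, 36, 54, 56, 72, 96, 108, 112, 126, 144],
  [6, 18, 21, 24, 28, 32, 81, 84, 96, 108, 112, 144, 162],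
  [6, 21, 24, 27, 32, 42, 48, 56, 81, 84, 96, 112, 126, 162],
  [6, 14, 16, 27, 54, 56, 72, 81, 84, 108, 112, 126, 162],
  [6, 12, 14, 28, 42, 81, 84, 108, 112, 126, 144, 162],
  [6, 16, 28, 32, 36, 42, 48, 54, 72, 96, 108, 112, 126, 144],
  [6, 16, 28, 32, 36, 42, 48, 56, 81, 84, 96, 108, 126, 162],
  [6, 12, 24, 27, 36, 54, 72, 81, 84, 108, 112, 144, 162],
  [6, 14, 18, 32, 36, 42, 72, 81, 96, 108, 112, 144, 162],
  [6, 18, 24, 27, 32, 48, 54, 72, 81, 84, 96, 108, 112, 162],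
  [6, 16, 21, 36, 42, 48, 54, 56, 72, 84, 108, 112, 126, 144],
  [6, 14, 21, 24, 36, 48, 72, 81, 84, 108, 126, 144, 162],
  [6, 16, 24, 32, 36, 42, 56, 72, 81, 84, 96, 108, 112, 162],
  [6, 12, 21, 28, 42, 56, 72, 81, 84, 108, 112, 144, 162],
  [6, 12, 18, 32, 48, 56, 72, 81, 96, 108, 112, 126, 162],
  [6, 16, 24, 32, 36, 48, 54, 56, 72, 96, 108, 112, 126, 144],
  [6, 14, 16, 28, 48, 56, 72, 81, 84, 108, 112, 144, 162],
  [6, 16, 27, 32, 36, 42, 54, 56, 72, 81, 96, 108, 144, 162],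
  [6, 12, 18, 36, 42, 56, 72, 81, 84, 108, 112, 144, 162],
  [6, 16, 18, 21, 32, 72, 81, 84, 96, 108, 112, 126, 162],
  [6, 18, 21, 32, 36, 42, 54, 56, 84, 96, 108, 112, 126, 144],
  [6, 21, 24, 28, 32, 36, 48, 56, 81, 96, 108, 112, 126, 162],
  [6, 21, 24, 27, 32, 42, 48, 56, 72, 81, 96, 126, 144, 162],
  [6, 14, 18, 27, 36, 56, 72, 81, 84, 112, 126, 144, 162],
  [6, 18, 27, 28, 32, 42, 54, 56, 72, 84, 96, 112, 144, 168],
  [6, 16, 27, 28, 32, 48, 54, 72, 81, 84, 96, 108, 126, 162],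
  [6, 14, 18, 28, 32, 56, 81, 84, 96, 108, 112, 144, 162],
  [6, 16, 27, 32, 36, 42, 48, 56, 81, 84, 96, 112, 144, 162],
  [6, 12, 16, 42, 48, 56, 72, 81, 84, 108, 112, 144, 162],
  [6, 12, 21, 32, 36, 48, 72, 81, 96, 108, 126, 144, 162],
  [6, 16, 21, 32, 42, 48, 54, 56, 84, 96, 108, 112, 126, 144],
  [6, 7, 32, 42, 72, 81, 84, 96, 108, 112, 144, 162],
  [6, 12, 32, 36, 42, 48, 56, 72, 81, 84, 96, 108, 112, 162],
  [6, 14, 16, 27, 48, 56, 72, 81, 84, 112, 126, 144, 162],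
  [6, 21, 24, 27, 28, 42, 54, 56, 81, 84, 108, 112, 144, 162],
  [6, 18, 24, 27, 32, 48, 54, 56, 81, 96, 108, 112, 126, 162],
  [6, 12, 24, 28, 32, 48, 81, 84, 96, 108, 126, 144, 162],
  [6, 14, 27, 32, 36, 48, 56, 72, 81, 84, 96, 112, 126, 162],
  [6, 12, 18, 32, 42, 56, 81, 84, 96, 108, 112, 144, 162],
  [6, 14, 28, 32, 36, 42, 54, 72, 84, 96, 108, 112, 126, 144],
  [6, 16, 21, 32, 36, 48, 54, 72, 84, 96, 108, 112, 126, 144],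
  [6, 24, 28, 32, 36, 42, 48, 54, 56, 72, 84, 96, 108, 126, 144],
  [6, 12, 24, 27, 32, 54, 72, 84, 96, 112, 126, 144, 168],
  [6, 12, 21, 28, 32, 72, 81, 84, 96, 108, 112, 144, 162],
  [6, 21, 24, 27, 28, 36, 54, 72, 81, 84, 108, 112, 144, 162],
  [6, 18, 21, 24, 42, 48, 56, 72, 81, 84, 108, 112, 126, 162],
  [6, 14, 18, 28, 36, 42, 81, 84, 108, 112, 126, 144, 162],
  [6, 16, 27, 28, 32, 42, 54, 72, 81, 96, 108, 112, 126, 162],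
  [6, 12, 18, 32, 36, 72, 81, 84, 96, 108, 112, 144, 162],
  [6, 14, 24, 32, 36, 54, 56, 72, 84, 96, 108, 112, 126, 144],
  [6, 18, 21, 27, 42, 48, 54, 56, 72, 81, 108, 126, 144, 162],
  [6, 18, 21, 28, 32, 48, 56, 72, 81, 96, 108, 112, 126, 162],
  [6, 16, 21, 27, 42, 54, 56, 72, 81, 84, 108, 112, 126, 162],
  [6, 24, 27, 32, 36, 42, 48, 54, 56, 81, 84, 96, 108, 112, 162],
  [6, 14, 24, 32, 42, 48, 56, 72, 81, 84, 96, 108, 144, 162],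
  [6, 18, 21, 28, 36, 42, 56, 72, 81, 84, 108, 112, 144, 162],
  [6, 14, 16, 28, 42, 48, 81, 84, 108, 112, 126, 144, 162],
  [6, 16, 24, 27, 32, 54, 56, 72, 81, 96, 108, 112, 126, 162],
  [6, 12, 16, 32, 48, 72, 81, 84, 96, 108, 112, 144, 162],
  [6, 14, 24, 27, 48, 54, 56, 72, 81, 84, 108, 112, 126, 162],
  [6, 14, 28, 32, 36, 42, 48, 81, 84, 96, 108, 112, 126, 162],
  [6, 18, 21, 32, 36, 42, 48, 56, 81, 96, 108, 126, 144, 162],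
  [6, 21, 24, 27, 32, 36, 42, 72, 81, 84, 96, 126, 162, 168],
  [6, 16, 21, 32, 36, 42, 56, 81, 84, 96, 108, 112, 126, 162],
  [6, 21, 24, 27, 28, 32, 54, 81, 84, 96, 108, 112, 144, 162],
  [6, 16, 21, 28, 42, 48, 56, 72, 81, 84, 108, 112, 144, 162],
  [6, 14, 16, 24, 48, 56, 81, 84, 108, 112, 126, 144, 162],
  [6, 18, 24, 27, 28, 48, 54, 72, 81, 84, 108, 126, 144, 162],
  [6, 24, 27, 32, 36, 42, 48, 54, 56, 72, 84, 96, 112, 126, 168],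
  [6, 21, 28, 32, 36, 42, 48, 56, 72, 81, 84, 96, 108, 112, 162],
  [6, 14, 24, 32, 36, 48, 56, 81, 84, 96, 108, 112, 126, 162],
  [6, 14, 27, 32, 36, 42, 54, 72, 81, 96, 108, 112, 144, 162],
  [6, 18, 21, 27, 36, 42, 56, 72, 81, 84, 112, 126, 144, 162],
  [6, 24, 27, 32, 36, 42, 48, 54, 56, 72, 81, 96, 108, 144, 162]]

-- `18144 = 2⁵·3⁴·7` is the lcm of all certificate entries: reciprocal sums become integer sums.
def IsBaseCertificate (L : List ℕ) : Prop :=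
  L.Nodup ∧ 6 ∈ L ∧ (∀ a ∈ L, a ∣ 18144 ∧ ¬ 5 ∣ a ∧ a ∉ baseExcluded) ∧
    9 * (L.map (18144 / ·)).sum = 4 * 18144

instance : DecidablePred IsBaseCertificate := fun _ => by
  unfold IsBaseCertificate; infer_instance

set_option maxRecDepth 10000 in
theorem baseCertificates_valid : ∀ L ∈ baseCertificates, IsBaseCertificate L := by
  decide

set_option maxRecDepth 10000 in
theorem baseCertificates_sums : baseCertificates.map List.sum = List.range' 418 571 := by
  decide

theorem IsBaseCertificate.hasBasePartition {L : List ℕ} (h : IsBaseCertificate L) :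
    HasBasePartition L.sum := by
  obtain ⟨hnd, h6, hL, hrec⟩ := h
  have hdvd (a) (ha : a ∈ L.toFinset) : a ∣ 18144 := (hL a (List.mem_toFinset.mp ha)).1
  refine ⟨L.toFinset, ⟨fun a ha => Nat.pos_of_dvd_of_pos (hdvd a ha) (by norm_num), ?_, ?_⟩,
    fun a ha => (hL a (List.mem_toFinset.mp ha)).2.1, List.mem_toFinset.mpr h6,
    Finset.disjoint_left.mpr fun a ha => (hL a (List.mem_toFinset.mp ha)).2.2⟩
  · simp [List.sum_toFinset _ hnd]
  · rw [sum_one_div_eq_of_dvd (by norm_num) hdvd, List.sum_toFinset _ hnd]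
    have : (((L.map (18144 / ·)).sum : ℕ) : ℚ) = 4 * 18144 / 9 := by
      rw [eq_div_iff (by norm_num)]
      exact_mod_cast (mul_comm _ _).trans hrec
    rw [this]
    norm_num

theorem hasBasePartition_of_le_of_le {n : ℕ} (h₁ : 418 ≤ n) (h₂ : n ≤ 988) :
    HasBasePartition n := by
  obtain ⟨L, hL, rfl⟩ : ∃ L ∈ baseCertificates, L.sum = n := by
    rw [← List.mem_map, baseCertificates_sums, List.mem_range'_1]
    omega
  exact (baseCertificates_valid L hL).hasBasePartition

theorem hasBasePartition_of_le {n : ℕ} (hn : 418 ≤ n) : HasBasePartition n := by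
  induction n using Nat.strong_induction_on with
  | _ n ih =>
    by_cases hw : n ≤ 988
    · exact hasBasePartition_of_le_of_le hn hw
    obtain ⟨s, U, hU, hs⟩ : ∃ s U, IsDoublingStep U s ∧ s ≤ 153 ∧ s % 2 = n % 2 := by
      rcases Nat.mod_two_eq_zero_or_one n with h | h
      · exact ⟨24, _, isDoublingStep_even, by omega⟩
      · exact ⟨153, _, isDoublingStep_odd, by omega⟩
    have := (ih ((n - s) / 2) (by omega) (by omega)).double hU
    rwa [show 2 * ((n - s) / 2) + s = n by omega] at this

theorem exists_isLevelStep {z : ℕ} (hz : z % 3 = 2) (n : ℕ) :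
    ∃ d W, IsLevelStep W d ∧ d ≤ 399 ∧ d * z % 3 = n % 3 := by
  have hmod (d : ℕ) : d * z % 3 = 2 * d % 3 := by rw [Nat.mul_mod, hz]; omega
  rcases (by omega : n % 3 = 0 ∨ n % 3 = 1 ∨ n % 3 = 2) with h | h | h
  · exact ⟨399, _, isLevelStep_399, by omega, by rw [hmod]; omega⟩
  · exact ⟨245, _, isLevelStep_245, by omega, by rw [hmod]; omega⟩
  · exact ⟨172, _, isLevelStep_172, by omega, by rw [hmod]; omega⟩

def partitionThreshold : ℕ → ℕ
  | 0 => 418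
  | j + 1 => 3 * partitionThreshold j + 399 * (2 * 4 ^ j)

theorem partitionThreshold_pos (j : ℕ) : 0 < partitionThreshold j := by
  cases j <;> simp [partitionThreshold]

theorem partitionThreshold_le (j : ℕ) : partitionThreshold j ≤ 798 * 4 ^ j := by
  induction j with
  | zero => simp [partitionThreshold]
  | succ j ih => rw [partitionThreshold, pow_succ]; omega

theorem hasLevelPartition_of_partitionThreshold_le (j : ℕ) {n : ℕ}
    (hn : partitionThreshold j ≤ n) :
    HasLevelPartition (4 / 3 ^ (j + 2)) (2 * 4 ^ j) n := by
  induction j generalizing n with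
  | zero =>
    convert (hasBasePartition_of_le hn).hasLevelPartition using 1 <;> norm_num
  | succ j ih =>
    set z := 2 * 4 ^ j
    have hz : z % 3 = 2 := by simp [z, Nat.mul_mod, Nat.pow_mod]
    obtain ⟨d, W, hW, hd, hdn⟩ := exists_isLevelStep hz n
    have hdz : d * z ≤ 399 * z := Nat.mul_le_mul_right z hd
    rw [partitionThreshold] at hn
    have hz5 : ¬ 5 ∣ z := (Nat.Prime.coprime_iff_not_dvd Nat.prime_five).mp
      (Nat.Coprime.mul_right (by norm_num) (Nat.Coprime.pow_right _ (by norm_num)))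
    have := (ih (n := (n - d * z) / 3) (by omega)).step hW (by omega) hz5
    rwa [show 3 * ((n - d * z) / 3) + d * z = n by omega, div_div, ← pow_succ,
      show 4 * z = 2 * 4 ^ (j + 1) by ring] at this

/-- For every `k ≥ 2` there is a positive integer `N < 106·4^k` such that every
`n ≥ N` admits a `5`-free `(4/3^k)`-partition. -/
theorem small_alpha_partitions (k : ℕ) (hk : 2 ≤ k) :
    ∃ N : ℕ, 0 < N ∧ N < 106 * 4 ^ k ∧ ∀ n : ℕ, N ≤ n →
      ∃ C : Finset ℕ, IsPartition (4 / 3 ^ k : ℚ) n C ∧ ∀ a ∈ C, ¬ (5 ∣ a) := by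
  obtain ⟨j, rfl⟩ : ∃ j, k = j + 2 := ⟨k - 2, by omega⟩
  refine ⟨partitionThreshold j, partitionThreshold_pos j, ?_, fun n hn => ?_⟩
  · have hle := partitionThreshold_le j
    have hpos : 0 < 4 ^ j := by positivity
    rw [pow_add]
    omega
  · obtain ⟨C, hC, hC5, -⟩ := hasLevelPartition_of_partitionThreshold_le j hn
    exact ⟨C, hC, hC5⟩
end

section
/- Let α be a fixed positive rational. For every real ε > 0 there exists m₀ such that for every integer m ≥ m₀ there exists an integer n ≥ (1/2 − ε)·(e^{2α} − 1)·m² for which no m-large α-partition of n exists. In particular N(α, m) ≥ (1/2 − o(1))·(e^{2α} − 1)·m² as m → ∞. (This is the lower-bound half of the asymptotic N(α, m) = (1/2 + o(1))(e^{2α} − 1)m².) -/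
open Finset Real Filter

lemma inv_add_one_le_log_add_one_sub_log {x : ℝ} (hx : 0 < x) :
    (x + 1)⁻¹ ≤ log (x + 1) - log x := by
  have h := one_sub_inv_le_log_of_pos (div_pos (by linarith : 0 < x + 1) hx)
  rwa [log_div (by linarith) hx.ne', inv_div, one_sub_div (by linarith), add_sub_cancel_left,
    one_div] at h

lemma sum_Ioc_inv_le_log_sub_log {a b : ℕ} (ha : 0 < a) (hab : a ≤ b) :
    ∑ j ∈ Ioc a b, (j : ℝ)⁻¹ ≤ log b - log a := by
  induction b, hab using Nat.le_induction with
  | base => simp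
  | succ b hab ih =>
    have hb : (0 : ℝ) < b := by exact_mod_cast ha.trans_le hab
    rw [sum_Ioc_succ_top hab]
    push_cast
    linarith [inv_add_one_le_log_add_one_sub_log hb]

lemma sum_Ioc_floor_mul_exp_inv_le {k : ℕ} (hk : 0 < k) {t : ℝ} (ht : 0 ≤ t) :
    ∑ j ∈ Ioc k ⌊k * exp t⌋₊, (j : ℝ)⁻¹ ≤ t := by
  have hkR : (0 : ℝ) < k := by exact_mod_cast hk
  have hkK : k ≤ ⌊k * exp t⌋₊ :=
    Nat.le_floor (le_mul_of_one_le_right hkR.le (one_le_exp ht))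
  have hK : (0 : ℝ) < ⌊k * exp t⌋₊ := by exact_mod_cast hk.trans_le hkK
  calc ∑ j ∈ Ioc k ⌊k * exp t⌋₊, (j : ℝ)⁻¹ ≤ log ⌊k * exp t⌋₊ - log k :=
        sum_Ioc_inv_le_log_sub_log hk hkK
    _ ≤ log (k * exp t) - log k := by gcongr; exact Nat.floor_le (by positivity)
    _ = t := by rw [log_mul hkR.ne' (exp_pos t).ne', log_exp]; ring

lemma two_mul_sum_Ioc_id_add {a b : ℕ} (hab : a ≤ b) :
    2 * ∑ j ∈ Ioc a b, j + a * (a + 1) = b * (b + 1) := by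
  induction b, hab using Nat.le_induction with
  | base => simp
  | succ b hab ih =>
    rw [sum_Ioc_succ_top hab]
    linarith

lemma le_sum_Ioc_floor_mul_sub_one {E ε : ℝ} {k : ℕ} (hE : 1 < E) (hk : E ≤ ε * (E - 1) * k) :
    (1 / 2 - ε) * (E ^ 2 - 1) * (k + 1) ^ 2 ≤ ∑ j ∈ Ioc k ⌊k * E⌋₊, (j : ℝ) - 1 := by
  set K := ⌊k * E⌋₊
  have hkR : (1 : ℝ) ≤ k := by
    rcases k with _ | k
    · simp at hk; linarith
    · simp
  have hkK : k ≤ K := Nat.le_floor (le_mul_of_one_le_right (by positivity) hE.le)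
  have hsum : 2 * ∑ j ∈ Ioc k K, (j : ℝ) + k * (k + 1) = K * (K + 1) := by
    have := congrArg (Nat.cast : ℕ → ℝ) (two_mul_sum_Ioc_id_add hkK)
    push_cast at this
    exact this
  have hK : k * E < K + 1 := Nat.lt_floor_add_one _
  have hε : 0 < ε := by
    have : 0 < ε * (E - 1) := pos_of_mul_pos_left (by linarith) (Nat.cast_nonneg k)
    exact pos_of_mul_pos_left this (by linarith)
  -- `x ↦ x² - x` is increasing beyond `1/2`, and `K + 1 > kE > 1`
  have hmono : (k * E) ^ 2 - k * E ≤ (K + 1) ^ 2 - (K + 1) := by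
    have hkE : 1 ≤ k * E := by nlinarith
    nlinarith
  -- the terms linear in `k` are absorbed by `ε (E² - 1) (k + 1)² ≥ E (E + 1) (k + 1)`
  nlinarith [mul_le_mul_of_nonneg_right hk (by positivity : (0 : ℝ) ≤ (E + 1) * (k + 1)),
    mul_nonneg hε.le (by nlinarith : (0 : ℝ) ≤ E ^ 2 - 1)]

lemma lt_floor_mul_of_le_sub_one_mul {E : ℝ} {k : ℕ} (hE : 1 < E) (hk : E ≤ (E - 1) * k) :
    k < ⌊k * E⌋₊ :=
  Nat.le_floor (by push_cast; nlinarith)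

lemma sum_le_sum_of_sum_one_div_le {A B : Finset ℕ} {t : ℕ} (hB : ∀ b ∈ B, b ≤ t)
    (hA : ∀ a ∈ A, a ∉ B → t ≤ a)
    (hrec : ∑ b ∈ B, (1 : ℚ) / b ≤ ∑ a ∈ A, (1 : ℚ) / a) :
    ∑ b ∈ B, b ≤ ∑ a ∈ A, a := by
  rw [← sum_sdiff_le_sum_sdiff] at hrec ⊢
  have hB' : ∀ b ∈ B \ A, (b : ℚ) ≤ t ^ 2 * (1 / b) := by
    intro b hb
    have hbt : (b : ℚ) ≤ t := by exact_mod_cast hB b (mem_sdiff.1 hb).1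
    rcases (Nat.cast_nonneg b : (0 : ℚ) ≤ b).eq_or_lt with h0 | h0
    · simp [← h0]
    · rw [mul_one_div, le_div_iff₀ h0]; nlinarith
  have hA' : ∀ a ∈ A \ B, t ^ 2 * (1 / (a : ℚ)) ≤ a := by
    intro a ha
    have hta : (t : ℚ) ≤ a := by exact_mod_cast hA a (mem_sdiff.1 ha).1 (mem_sdiff.1 ha).2
    rcases (Nat.cast_nonneg t : (0 : ℚ) ≤ t).eq_or_lt with h0 | h0
    · simp [← h0]
    · rw [mul_one_div, div_le_iff₀ (h0.trans_le hta)]; nlinarith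
  have key : ∑ b ∈ B \ A, (b : ℚ) ≤ ∑ a ∈ A \ B, (a : ℚ) :=
    calc ∑ b ∈ B \ A, (b : ℚ) ≤ ∑ b ∈ B \ A, t ^ 2 * (1 / (b : ℚ)) := sum_le_sum hB'
      _ = t ^ 2 * ∑ b ∈ B \ A, 1 / (b : ℚ) := (mul_sum ..).symm
      _ ≤ t ^ 2 * ∑ a ∈ A \ B, 1 / (a : ℚ) := by gcongr
      _ = ∑ a ∈ A \ B, t ^ 2 * (1 / (a : ℚ)) := mul_sum ..
      _ ≤ ∑ a ∈ A \ B, (a : ℚ) := sum_le_sum hA'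
  rw [← Nat.cast_sum, ← Nat.cast_sum] at key
  exact_mod_cast key

lemma sum_Ioc_le_of_isPartition {α : ℚ} {n k K : ℕ} {A : Finset ℕ} (hA : IsPartition α n A)
    (hlarge : ∀ a ∈ A, k < a) (hharm : ∑ j ∈ Ioc k K, (1 : ℚ) / j ≤ α) :
    ∑ j ∈ Ioc k K, j ≤ n := by
  obtain ⟨-, hsum, hrec⟩ := hA
  rw [← hsum]
  refine sum_le_sum_of_sum_one_div_le (t := K) (fun j hj => (mem_Ioc.1 hj).2) ?_ (hrec ▸ hharm)
  intro a ha haK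
  simp only [mem_Ioc, not_and, not_le] at haK
  exact (haK (hlarge a ha)).le

/-- Lower-bound half of `N(α,m) = (1/2 + o(1))(e^{2α}-1)m²`: for fixed positive
rational `α` and every `ε > 0`, for all large `m`, there exists an integer
`n ≥ (1/2-ε)(e^{2α}-1)m²` admitting no `m`-large `α`-partition. -/
theorem nalpham_lower (α : ℚ) (hα : 0 < α) (ε : ℝ) (hε : 0 < ε) :
    ∃ m₀ : ℕ, ∀ m : ℕ, m₀ ≤ m →
      ∃ n : ℕ, (1 / 2 - ε) * (Real.exp (2 * (α : ℝ)) - 1) * (m : ℝ) ^ 2 ≤ (n : ℝ) ∧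
        ¬ ∃ A : Finset ℕ, IsPartition α n A ∧ ∀ a ∈ A, m ≤ a := by
  have hαR : (0 : ℝ) < α := by exact_mod_cast hα
  obtain ⟨E, hEα⟩ : ∃ E, exp (α : ℝ) = E := ⟨_, rfl⟩
  have hE : 1 < E := hEα ▸ one_lt_exp_iff.2 hαR
  have hlin {c : ℝ} (hc : 0 < c) : ∀ᶠ k : ℕ in atTop, E ≤ c * k :=
    (tendsto_natCast_atTop_atTop.const_mul_atTop hc).eventually_ge_atTop E
  obtain ⟨k₀, hk₀⟩ := eventually_atTop.1
    ((hlin (mul_pos hε (sub_pos.2 hE))).and (hlin (sub_pos.2 hE)))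
  refine ⟨k₀ + 1, fun m hm => ?_⟩
  obtain ⟨k, rfl⟩ : ∃ k, m = k + 1 := ⟨m - 1, by omega⟩
  obtain ⟨hkε, hkE⟩ := hk₀ k (by omega)
  have hkK := lt_floor_mul_of_le_sub_one_mul hE hkE
  have hk0 : 0 < k := Nat.pos_of_ne_zero (by rintro rfl; simp at hkK)
  set S := ∑ j ∈ Ioc k ⌊k * E⌋₊, j
  have hS : 0 < S := sum_pos' (fun _ _ => Nat.zero_le _) ⟨_, right_mem_Ioc.2 hkK, by omega⟩
  refine ⟨S - 1, ?_, ?_⟩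
  · rw [Nat.cast_pred hS, Nat.cast_sum, show 2 * (α : ℝ) = (2 : ℕ) * α by norm_num, exp_nat_mul,
      hEα, Nat.cast_add_one]
    exact le_sum_Ioc_floor_mul_sub_one hE hkε
  · rintro ⟨A, hA, hlarge⟩
    have hharm : ∑ j ∈ Ioc k ⌊k * E⌋₊, (1 : ℚ) / j ≤ α := by
      have := hEα ▸ sum_Ioc_floor_mul_exp_inv_le hk0 hαR.le
      refine Rat.cast_le.1 (?_ : ((_ : ℚ) : ℝ) ≤ _)
      rw [Rat.cast_sum]
      simpa only [one_div, Rat.cast_inv, Rat.cast_natCast] using this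
    have := sum_Ioc_le_of_isPartition hA hlarge hharm
    omega
end

section
/- Every integer n ≥ 78 can be written as a sum of distinct positive integers a₁, a₂, …, a_r with 1/a₁ + 1/a₂ + … + 1/a_r = 1; that is, every integer n ≥ 78 admits a 1-partition. -/
def Good (n : ℕ) : Prop := ∃ A : Finset ℕ, IsPartition 1 n A ∧ 1 ∉ A ∧ 3 ∉ A


lemma double_facts {n : ℕ} {A B : Finset ℕ}
    (hB : B = A.image (fun a => 2 * a))
    (h : IsPartition 1 n A) :
    (∀ x ∈ B, ∃ a ∈ A, 2 * a = x) ∧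
    (∑ b ∈ B, b) = 2 * n ∧
    (∑ b ∈ B, (1 : ℚ) / b) = 1 / 2 := by
  subst hB
  obtain ⟨hpos, hsum, hrec⟩ := h
  have hinj : ∀ a ∈ A, ∀ b ∈ A, 2 * a = 2 * b → a = b := by intros; omega
  refine ⟨?_, ?_, ?_⟩
  · intro x hx
    simpa using (Finset.mem_image.mp hx).imp (fun a ⟨h1, h2⟩ => ⟨h1, h2⟩)
  · rw [Finset.sum_image hinj, ← Finset.mul_sum, hsum]
  · rw [Finset.sum_image hinj]
    have : ∀ a ∈ A, (1 : ℚ) / (↑(2 * a)) = (1/2) * (1/a) := by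
      intro a ha
      push_cast
      rw [mul_comm]
      rw [one_div_mul_eq_div, div_div]
    rw [Finset.sum_congr rfl this, ← Finset.mul_sum, hrec, mul_one]

lemma step_even {n : ℕ} (h : Good n) : Good (2 * n + 2) := by
  obtain ⟨A, hp, h1, h3⟩ := h
  obtain ⟨hmem, hsum, hrec⟩ := double_facts rfl hp
  have hpos := hp.1
  set B := A.image (fun a => 2 * a) with hB
  have h2B : 2 ∉ B := by
    intro hx; obtain ⟨a, ha, hax⟩ := hmem 2 hx
    have : a = 1 := by omega
    exact h1 (this ▸ ha)
  refine ⟨insert 2 B, ⟨?_, ?_, ?_⟩, ?_, ?_⟩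
  · intro x hx
    rcases Finset.mem_insert.mp hx with rfl | hx
    · norm_num
    · obtain ⟨a, ha, rfl⟩ := hmem x hx
      have := hpos a ha; omega
  · rw [Finset.sum_insert h2B, hsum]; ring
  · rw [Finset.sum_insert h2B, hrec]; norm_num
  · simp only [Finset.mem_insert]
    rintro (h | h)
    · omega
    · obtain ⟨a, _, hax⟩ := hmem 1 h; omega
  · simp only [Finset.mem_insert]
    rintro (h | h)
    · omega
    · obtain ⟨a, _, hax⟩ := hmem 3 h; omega

lemma step_odd {n : ℕ} (h : Good n) : Good (2 * n + 65) := by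
  obtain ⟨A, hp, h1, h3⟩ := h
  obtain ⟨hmem, hsum, hrec⟩ := double_facts rfl hp
  have hpos := hp.1
  set B := A.image (fun a => 2 * a) with hB
  have hodd : ∀ x, x % 2 = 1 → x ∉ B := by
    intro x hx hxB; obtain ⟨a, _, hax⟩ := hmem x hxB; omega
  have h45 : 45 ∉ B := hodd 45 rfl
  have h9 : (9:ℕ) ∉ insert 45 B := by
    simp only [Finset.mem_insert]; rintro (h | h); · omega
    · exact hodd 9 rfl h
  have h6 : (6:ℕ) ∉ insert 9 (insert 45 B) := by
    simp only [Finset.mem_insert]; rintro (h | h | h)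
    · omega
    · omega
    · obtain ⟨a, ha, hax⟩ := hmem 6 h
      have : a = 3 := by omega
      exact h3 (this ▸ ha)
  have h5 : (5:ℕ) ∉ insert 6 (insert 9 (insert 45 B)) := by
    simp only [Finset.mem_insert]; rintro (h | h | h | h)
    · omega
    · omega
    · omega
    · exact hodd 5 rfl h
  refine ⟨insert 5 (insert 6 (insert 9 (insert 45 B))), ⟨?_, ?_, ?_⟩, ?_, ?_⟩
  · intro x hx
    simp only [Finset.mem_insert] at hx
    rcases hx with rfl | rfl | rfl | rfl | hx
    · norm_num
    · norm_num
    · norm_num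
    · norm_num
    · obtain ⟨a, ha, rfl⟩ := hmem x hx
      have := hpos a ha; omega
  · rw [Finset.sum_insert h5, Finset.sum_insert h6, Finset.sum_insert h9,
      Finset.sum_insert h45, hsum]; ring
  · rw [Finset.sum_insert h5, Finset.sum_insert h6, Finset.sum_insert h9,
      Finset.sum_insert h45, hrec]; norm_num
  · simp only [Finset.mem_insert]
    rintro (h | h | h | h | h)
    · omega
    · omega
    · omega
    · omega
    · obtain ⟨a, _, hax⟩ := hmem 1 h; omega
  · simp only [Finset.mem_insert]
    rintro (h | h | h | h | h)
    · omega
    · omega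
    · omega
    · omega
    · obtain ⟨a, _, hax⟩ := hmem 3 h; omega

lemma good_78 : Good 78 :=
  ⟨{2,6,8,10,12,40}, ⟨by decide, by norm_num, by norm_num⟩, by decide, by decide⟩

lemma good_79 : Good 79 :=
  ⟨{2,5,8,10,24,30}, ⟨by decide, by norm_num, by norm_num⟩, by decide, by decide⟩

lemma good_80 : Good 80 :=
  ⟨{2,4,10,15,21,28}, ⟨by decide, by norm_num, by norm_num⟩, by decide, by decide⟩

lemma good_81 : Good 81 :=
  ⟨{2,4,10,15,20,30}, ⟨by decide, by norm_num, by norm_num⟩, by decide, by decide⟩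

lemma good_82 : Good 82 :=
  ⟨{2,4,9,18,21,28}, ⟨by decide, by norm_num, by norm_num⟩, by decide, by decide⟩

lemma good_83 : Good 83 :=
  ⟨{2,4,9,18,20,30}, ⟨by decide, by norm_num, by norm_num⟩, by decide, by decide⟩

lemma good_84 : Good 84 :=
  ⟨{2,4,11,12,22,33}, ⟨by decide, by norm_num, by norm_num⟩, by decide, by decide⟩

lemma good_85 : Good 85 :=
  ⟨{2,4,10,14,20,35}, ⟨by decide, by norm_num, by norm_num⟩, by decide, by decide⟩

lemma good_86 : Good 86 :=
  ⟨{2,5,9,10,15,45}, ⟨by decide, by norm_num, by norm_num⟩, by decide, by decide⟩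

lemma good_87 : Good 87 :=
  ⟨{2,4,6,15,60}, ⟨by decide, by norm_num, by norm_num⟩, by decide, by decide⟩

lemma good_88 : Good 88 :=
  ⟨{2,4,8,20,24,30}, ⟨by decide, by norm_num, by norm_num⟩, by decide, by decide⟩

lemma good_89 : Good 89 :=
  ⟨{2,6,7,8,24,42}, ⟨by decide, by norm_num, by norm_num⟩, by decide, by decide⟩

lemma good_90 : Good 90 :=
  ⟨{2,7,9,12,14,18,28}, ⟨by decide, by norm_num, by norm_num⟩, by decide, by decide⟩

lemma good_92 : Good 92 :=
  ⟨{2,4,5,36,45}, ⟨by decide, by norm_num, by norm_num⟩, by decide, by decide⟩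

lemma good_93 : Good 93 :=
  ⟨{2,5,8,9,24,45}, ⟨by decide, by norm_num, by norm_num⟩, by decide, by decide⟩

lemma good_94 : Good 94 :=
  ⟨{2,6,10,12,15,21,28}, ⟨by decide, by norm_num, by norm_num⟩, by decide, by decide⟩

lemma good_95 : Good 95 :=
  ⟨{2,4,8,9,72}, ⟨by decide, by norm_num, by norm_num⟩, by decide, by decide⟩

lemma good_96 : Good 96 :=
  ⟨{2,5,7,10,30,42}, ⟨by decide, by norm_num, by norm_num⟩, by decide, by decide⟩

lemma good_97 : Good 97 :=
  ⟨{2,4,9,16,18,48}, ⟨by decide, by norm_num, by norm_num⟩, by decide, by decide⟩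

lemma good_99 : Good 99 :=
  ⟨{2,4,8,15,30,40}, ⟨by decide, by norm_num, by norm_num⟩, by decide, by decide⟩

lemma good_100 : Good 100 :=
  ⟨{2,6,7,8,21,56}, ⟨by decide, by norm_num, by norm_num⟩, by decide, by decide⟩

lemma good_101 : Good 101 :=
  ⟨{2,4,5,30,60}, ⟨by decide, by norm_num, by norm_num⟩, by decide, by decide⟩

lemma good_102 : Good 102 :=
  ⟨{2,4,8,16,24,48}, ⟨by decide, by norm_num, by norm_num⟩, by decide, by decide⟩

lemma good_103 : Good 103 :=
  ⟨{2,4,8,14,35,40}, ⟨by decide, by norm_num, by norm_num⟩, by decide, by decide⟩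

lemma good_104 : Good 104 :=
  ⟨{2,4,7,21,28,42}, ⟨by decide, by norm_num, by norm_num⟩, by decide, by decide⟩

lemma good_105 : Good 105 :=
  ⟨{2,4,7,20,30,42}, ⟨by decide, by norm_num, by norm_num⟩, by decide, by decide⟩

lemma good_106 : Good 106 :=
  ⟨{2,5,6,12,36,45}, ⟨by decide, by norm_num, by norm_num⟩, by decide, by decide⟩

lemma good_107 : Good 107 :=
  ⟨{2,6,7,14,20,28,30}, ⟨by decide, by norm_num, by norm_num⟩, by decide, by decide⟩

lemma good_108 : Good 108 :=
  ⟨{2,4,9,12,27,54}, ⟨by decide, by norm_num, by norm_num⟩, by decide, by decide⟩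

lemma good_109 : Good 109 :=
  ⟨{2,4,5,28,70}, ⟨by decide, by norm_num, by norm_num⟩, by decide, by decide⟩

lemma good_110 : Good 110 :=
  ⟨{2,4,6,14,84}, ⟨by decide, by norm_num, by norm_num⟩, by decide, by decide⟩

lemma good_111 : Good 111 :=
  ⟨{2,5,10,14,15,30,35}, ⟨by decide, by norm_num, by norm_num⟩, by decide, by decide⟩

lemma good_112 : Good 112 :=
  ⟨{2,4,8,14,28,56}, ⟨by decide, by norm_num, by norm_num⟩, by decide, by decide⟩

lemma good_113 : Good 113 :=
  ⟨{2,4,8,15,24,60}, ⟨by decide, by norm_num, by norm_num⟩, by decide, by decide⟩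

lemma good_114 : Good 114 :=
  ⟨{2,4,7,21,24,56}, ⟨by decide, by norm_num, by norm_num⟩, by decide, by decide⟩

lemma good_115 : Good 115 :=
  ⟨{2,5,6,12,30,60}, ⟨by decide, by norm_num, by norm_num⟩, by decide, by decide⟩

lemma good_116 : Good 116 :=
  ⟨{2,5,8,9,20,72}, ⟨by decide, by norm_num, by norm_num⟩, by decide, by decide⟩

lemma good_117 : Good 117 :=
  ⟨{2,4,12,20,21,28,30}, ⟨by decide, by norm_num, by norm_num⟩, by decide, by decide⟩

lemma good_118 : Good 118 :=
  ⟨{2,5,6,14,21,70}, ⟨by decide, by norm_num, by norm_num⟩, by decide, by decide⟩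

lemma good_119 : Good 119 :=
  ⟨{2,4,7,16,42,48}, ⟨by decide, by norm_num, by norm_num⟩, by decide, by decide⟩

lemma good_120 : Good 120 :=
  ⟨{2,4,14,15,20,30,35}, ⟨by decide, by norm_num, by norm_num⟩, by decide, by decide⟩

lemma good_121 : Good 121 :=
  ⟨{2,4,11,21,22,28,33}, ⟨by decide, by norm_num, by norm_num⟩, by decide, by decide⟩

lemma good_122 : Good 122 :=
  ⟨{2,4,7,18,28,63}, ⟨by decide, by norm_num, by norm_num⟩, by decide, by decide⟩

lemma good_123 : Good 123 :=
  ⟨{2,4,6,30,36,45}, ⟨by decide, by norm_num, by norm_num⟩, by decide, by decide⟩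

lemma good_124 : Good 124 :=
  ⟨{2,4,8,12,42,56}, ⟨by decide, by norm_num, by norm_num⟩, by decide, by decide⟩

lemma good_125 : Good 125 :=
  ⟨{2,5,7,20,21,28,42}, ⟨by decide, by norm_num, by norm_num⟩, by decide, by decide⟩

lemma good_126 : Good 126 :=
  ⟨{2,4,8,12,40,60}, ⟨by decide, by norm_num, by norm_num⟩, by decide, by decide⟩

lemma good_127 : Good 127 :=
  ⟨{2,4,12,15,24,30,40}, ⟨by decide, by norm_num, by norm_num⟩, by decide, by decide⟩

lemma good_128 : Good 128 :=
  ⟨{2,6,7,12,21,24,56}, ⟨by decide, by norm_num, by norm_num⟩, by decide, by decide⟩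

lemma good_129 : Good 129 :=
  ⟨{2,4,6,26,39,52}, ⟨by decide, by norm_num, by norm_num⟩, by decide, by decide⟩

lemma good_130 : Good 130 :=
  ⟨{2,4,7,15,42,60}, ⟨by decide, by norm_num, by norm_num⟩, by decide, by decide⟩

lemma good_131 : Good 131 :=
  ⟨{2,4,9,14,18,84}, ⟨by decide, by norm_num, by norm_num⟩, by decide, by decide⟩

lemma good_132 : Good 132 :=
  ⟨{2,4,12,16,20,30,48}, ⟨by decide, by norm_num, by norm_num⟩, by decide, by decide⟩

lemma good_133 : Good 133 :=
  ⟨{2,5,8,14,20,28,56}, ⟨by decide, by norm_num, by norm_num⟩, by decide, by decide⟩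

lemma good_134 : Good 134 :=
  ⟨{2,4,6,24,42,56}, ⟨by decide, by norm_num, by norm_num⟩, by decide, by decide⟩

lemma good_135 : Good 135 :=
  ⟨{2,5,7,14,30,35,42}, ⟨by decide, by norm_num, by norm_num⟩, by decide, by decide⟩

lemma good_136 : Good 136 :=
  ⟨{2,4,5,25,100}, ⟨by decide, by norm_num, by norm_num⟩, by decide, by decide⟩

lemma good_137 : Good 137 :=
  ⟨{2,4,9,10,40,72}, ⟨by decide, by norm_num, by norm_num⟩, by decide, by decide⟩

lemma good_138 : Good 138 :=
  ⟨{2,5,10,12,14,35,60}, ⟨by decide, by norm_num, by norm_num⟩, by decide, by decide⟩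

lemma good_139 : Good 139 :=
  ⟨{2,4,9,21,28,30,45}, ⟨by decide, by norm_num, by norm_num⟩, by decide, by decide⟩

lemma good_140 : Good 140 :=
  ⟨{2,4,6,28,30,70}, ⟨by decide, by norm_num, by norm_num⟩, by decide, by decide⟩

lemma good_141 : Good 141 :=
  ⟨{2,5,6,8,120}, ⟨by decide, by norm_num, by norm_num⟩, by decide, by decide⟩

lemma good_142 : Good 142 :=
  ⟨{2,4,10,15,30,36,45}, ⟨by decide, by norm_num, by norm_num⟩, by decide, by decide⟩

lemma good_143 : Good 143 :=
  ⟨{2,4,12,15,20,30,60}, ⟨by decide, by norm_num, by norm_num⟩, by decide, by decide⟩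

lemma good_144 : Good 144 :=
  ⟨{2,4,6,22,44,66}, ⟨by decide, by norm_num, by norm_num⟩, by decide, by decide⟩

lemma good_145 : Good 145 :=
  ⟨{2,4,9,21,27,28,54}, ⟨by decide, by norm_num, by norm_num⟩, by decide, by decide⟩

lemma good_146 : Good 146 :=
  ⟨{2,4,9,20,27,30,54}, ⟨by decide, by norm_num, by norm_num⟩, by decide, by decide⟩

lemma good_147 : Good 147 :=
  ⟨{2,4,7,15,35,84}, ⟨by decide, by norm_num, by norm_num⟩, by decide, by decide⟩

lemma good_148 : Good 148 :=
  ⟨{2,4,7,14,44,77}, ⟨by decide, by norm_num, by norm_num⟩, by decide, by decide⟩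

lemma good_149 : Good 149 :=
  ⟨{2,4,8,24,30,36,45}, ⟨by decide, by norm_num, by norm_num⟩, by decide, by decide⟩

lemma good_150 : Good 150 :=
  ⟨{2,4,9,18,26,39,52}, ⟨by decide, by norm_num, by norm_num⟩, by decide, by decide⟩

lemma good_151 : Good 151 :=
  ⟨{2,4,9,10,36,90}, ⟨by decide, by norm_num, by norm_num⟩, by decide, by decide⟩

lemma good_152 : Good 152 :=
  ⟨{2,4,8,21,35,40,42}, ⟨by decide, by norm_num, by norm_num⟩, by decide, by decide⟩

lemma good_153 : Good 153 :=
  ⟨{2,4,6,20,55,66}, ⟨by decide, by norm_num, by norm_num⟩, by decide, by decide⟩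

lemma good_154 : Good 154 :=
  ⟨{2,4,6,21,44,77}, ⟨by decide, by norm_num, by norm_num⟩, by decide, by decide⟩

lemma good_155 : Good 155 :=
  ⟨{2,4,5,24,120}, ⟨by decide, by norm_num, by norm_num⟩, by decide, by decide⟩

lemma good_156 : Good 156 :=
  ⟨{2,5,8,15,16,30,80}, ⟨by decide, by norm_num, by norm_num⟩, by decide, by decide⟩

lemma good_157 : Good 157 :=
  ⟨{2,4,6,20,50,75}, ⟨by decide, by norm_num, by norm_num⟩, by decide, by decide⟩

lemma good_158 : Good 158 :=
  ⟨{2,4,12,16,20,24,80}, ⟨by decide, by norm_num, by norm_num⟩, by decide, by decide⟩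

lemma good_159 : Good 159 :=
  ⟨{2,4,6,21,42,84}, ⟨by decide, by norm_num, by norm_num⟩, by decide, by decide⟩

lemma good_160 : Good 160 :=
  ⟨{2,4,6,20,48,80}, ⟨by decide, by norm_num, by norm_num⟩, by decide, by decide⟩

lemma good_161 : Good 161 :=
  ⟨{2,4,8,21,28,42,56}, ⟨by decide, by norm_num, by norm_num⟩, by decide, by decide⟩

lemma good_162 : Good 162 :=
  ⟨{2,4,8,20,30,42,56}, ⟨by decide, by norm_num, by norm_num⟩, by decide, by decide⟩

lemma good_163 : Good 163 :=
  ⟨{2,4,7,10,140}, ⟨by decide, by norm_num, by norm_num⟩, by decide, by decide⟩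

lemma good_164 : Good 164 :=
  ⟨{2,4,6,19,57,76}, ⟨by decide, by norm_num, by norm_num⟩, by decide, by decide⟩

lemma good_165 : Good 165 :=
  ⟨{2,4,9,15,30,45,60}, ⟨by decide, by norm_num, by norm_num⟩, by decide, by decide⟩

lemma good_166 : Good 166 :=
  ⟨{2,4,7,30,36,42,45}, ⟨by decide, by norm_num, by norm_num⟩, by decide, by decide⟩

lemma good_167 : Good 167 :=
  ⟨{2,4,6,20,45,90}, ⟨by decide, by norm_num, by norm_num⟩, by decide, by decide⟩

lemma good_168 : Good 168 :=
  ⟨{2,4,8,18,36,40,60}, ⟨by decide, by norm_num, by norm_num⟩, by decide, by decide⟩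

lemma good_169 : Good 169 :=
  ⟨{2,4,6,22,36,99}, ⟨by decide, by norm_num, by norm_num⟩, by decide, by decide⟩

lemma good_170 : Good 170 :=
  ⟨{2,4,8,18,35,40,63}, ⟨by decide, by norm_num, by norm_num⟩, by decide, by decide⟩

lemma good_171 : Good 171 :=
  ⟨{2,4,8,21,28,36,72}, ⟨by decide, by norm_num, by norm_num⟩, by decide, by decide⟩

lemma good_172 : Good 172 :=
  ⟨{2,4,7,26,39,42,52}, ⟨by decide, by norm_num, by norm_num⟩, by decide, by decide⟩

lemma good_173 : Good 173 :=
  ⟨{2,4,9,15,28,45,70}, ⟨by decide, by norm_num, by norm_num⟩, by decide, by decide⟩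

lemma good_174 : Good 174 :=
  ⟨{2,4,9,12,21,126}, ⟨by decide, by norm_num, by norm_num⟩, by decide, by decide⟩

lemma good_175 : Good 175 :=
  ⟨{2,4,8,11,40,110}, ⟨by decide, by norm_num, by norm_num⟩, by decide, by decide⟩

lemma good_176 : Good 176 :=
  ⟨{2,4,8,12,30,120}, ⟨by decide, by norm_num, by norm_num⟩, by decide, by decide⟩

lemma good_177 : Good 177 :=
  ⟨{2,4,6,18,63,84}, ⟨by decide, by norm_num, by norm_num⟩, by decide, by decide⟩

lemma good_178 : Good 178 :=
  ⟨{2,4,8,16,40,48,60}, ⟨by decide, by norm_num, by norm_num⟩, by decide, by decide⟩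

lemma good_179 : Good 179 :=
  ⟨{2,4,6,20,42,105}, ⟨by decide, by norm_num, by norm_num⟩, by decide, by decide⟩

lemma good_180 : Good 180 :=
  ⟨{2,4,6,18,60,90}, ⟨by decide, by norm_num, by norm_num⟩, by decide, by decide⟩

lemma good_181 : Good 181 :=
  ⟨{2,4,6,13,156}, ⟨by decide, by norm_num, by norm_num⟩, by decide, by decide⟩

lemma good_182 : Good 182 :=
  ⟨{2,4,14,18,24,28,36,56}, ⟨by decide, by norm_num, by norm_num⟩, by decide, by decide⟩

lemma good_183 : Good 183 :=
  ⟨{2,4,7,28,30,42,70}, ⟨by decide, by norm_num, by norm_num⟩, by decide, by decide⟩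

lemma good_184 : Good 184 :=
  ⟨{2,4,8,21,28,33,88}, ⟨by decide, by norm_num, by norm_num⟩, by decide, by decide⟩

lemma good_185 : Good 185 :=
  ⟨{2,4,7,27,28,54,63}, ⟨by decide, by norm_num, by norm_num⟩, by decide, by decide⟩

lemma good_186 : Good 186 :=
  ⟨{2,4,6,24,30,120}, ⟨by decide, by norm_num, by norm_num⟩, by decide, by decide⟩

lemma good_187 : Good 187 :=
  ⟨{2,4,7,22,42,44,66}, ⟨by decide, by norm_num, by norm_num⟩, by decide, by decide⟩

lemma good_188 : Good 188 :=
  ⟨{2,4,9,14,30,45,84}, ⟨by decide, by norm_num, by norm_num⟩, by decide, by decide⟩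

lemma good_189 : Good 189 :=
  ⟨{2,4,7,14,36,126}, ⟨by decide, by norm_num, by norm_num⟩, by decide, by decide⟩

lemma good_190 : Good 190 :=
  ⟨{2,4,7,21,40,56,60}, ⟨by decide, by norm_num, by norm_num⟩, by decide, by decide⟩

lemma good_191 : Good 191 :=
  ⟨{2,4,8,16,36,45,80}, ⟨by decide, by norm_num, by norm_num⟩, by decide, by decide⟩

lemma good_192 : Good 192 :=
  ⟨{2,4,5,55,60,66}, ⟨by decide, by norm_num, by norm_num⟩, by decide, by decide⟩

lemma good_193 : Good 193 :=
  ⟨{2,4,7,24,30,56,70}, ⟨by decide, by norm_num, by norm_num⟩, by decide, by decide⟩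

lemma good_194 : Good 194 :=
  ⟨{2,4,7,12,78,91}, ⟨by decide, by norm_num, by norm_num⟩, by decide, by decide⟩

lemma good_195 : Good 195 :=
  ⟨{2,4,6,21,36,126}, ⟨by decide, by norm_num, by norm_num⟩, by decide, by decide⟩

lemma good_196 : Good 196 :=
  ⟨{2,4,5,50,60,75}, ⟨by decide, by norm_num, by norm_num⟩, by decide, by decide⟩

lemma good_197 : Good 197 :=
  ⟨{2,4,7,21,42,44,77}, ⟨by decide, by norm_num, by norm_num⟩, by decide, by decide⟩

lemma good_198 : Good 198 :=
  ⟨{2,4,7,15,30,140}, ⟨by decide, by norm_num, by norm_num⟩, by decide, by decide⟩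

lemma good_199 : Good 199 :=
  ⟨{2,4,5,48,60,80}, ⟨by decide, by norm_num, by norm_num⟩, by decide, by decide⟩

lemma good_200 : Good 200 :=
  ⟨{2,4,7,12,70,105}, ⟨by decide, by norm_num, by norm_num⟩, by decide, by decide⟩

lemma good_201 : Good 201 :=
  ⟨{2,4,6,20,39,130}, ⟨by decide, by norm_num, by norm_num⟩, by decide, by decide⟩

lemma good_202 : Good 202 :=
  ⟨{2,4,5,44,70,77}, ⟨by decide, by norm_num, by norm_num⟩, by decide, by decide⟩

lemma good_203 : Good 203 :=
  ⟨{2,4,5,45,63,84}, ⟨by decide, by norm_num, by norm_num⟩, by decide, by decide⟩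

lemma good_204 : Good 204 :=
  ⟨{2,4,8,10,60,120}, ⟨by decide, by norm_num, by norm_num⟩, by decide, by decide⟩

lemma good_205 : Good 205 :=
  ⟨{2,4,7,24,28,56,84}, ⟨by decide, by norm_num, by norm_num⟩, by decide, by decide⟩

lemma good_206 : Good 206 :=
  ⟨{2,4,5,45,60,90}, ⟨by decide, by norm_num, by norm_num⟩, by decide, by decide⟩

lemma good_207 : Good 207 :=
  ⟨{2,4,5,42,70,84}, ⟨by decide, by norm_num, by norm_num⟩, by decide, by decide⟩

lemma good_208 : Good 208 :=
  ⟨{2,4,6,21,35,140}, ⟨by decide, by norm_num, by norm_num⟩, by decide, by decide⟩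

lemma good_209 : Good 209 :=
  ⟨{2,4,9,14,24,72,84}, ⟨by decide, by norm_num, by norm_num⟩, by decide, by decide⟩

lemma good_210 : Good 210 :=
  ⟨{2,4,6,40,42,56,60}, ⟨by decide, by norm_num, by norm_num⟩, by decide, by decide⟩

lemma good_211 : Good 211 :=
  ⟨{2,4,7,21,33,56,88}, ⟨by decide, by norm_num, by norm_num⟩, by decide, by decide⟩

lemma good_212 : Good 212 :=
  ⟨{2,4,7,20,35,60,84}, ⟨by decide, by norm_num, by norm_num⟩, by decide, by decide⟩

lemma good_213 : Good 213 :=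
  ⟨{2,4,5,40,72,90}, ⟨by decide, by norm_num, by norm_num⟩, by decide, by decide⟩

lemma good_214 : Good 214 :=
  ⟨{2,4,6,36,45,55,66}, ⟨by decide, by norm_num, by norm_num⟩, by decide, by decide⟩

lemma good_215 : Good 215 :=
  ⟨{2,4,6,35,45,60,63}, ⟨by decide, by norm_num, by norm_num⟩, by decide, by decide⟩

lemma good_216 : Good 216 :=
  ⟨{2,4,8,15,40,42,105}, ⟨by decide, by norm_num, by norm_num⟩, by decide, by decide⟩

lemma good_217 : Good 217 :=
  ⟨{2,4,8,14,21,168}, ⟨by decide, by norm_num, by norm_num⟩, by decide, by decide⟩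

lemma good_218 : Good 218 :=
  ⟨{2,4,5,42,60,105}, ⟨by decide, by norm_num, by norm_num⟩, by decide, by decide⟩

lemma good_219 : Good 219 :=
  ⟨{2,4,6,35,42,60,70}, ⟨by decide, by norm_num, by norm_num⟩, by decide, by decide⟩

lemma good_220 : Good 220 :=
  ⟨{2,4,5,38,76,95}, ⟨by decide, by norm_num, by norm_num⟩, by decide, by decide⟩

lemma good_247 : Good 247 :=
  ⟨{2,4,5,40,56,140}, ⟨by decide, by norm_num, by norm_num⟩, by decide, by decide⟩

lemma good_261 : Good 261 :=
  ⟨{2,4,6,24,56,78,91}, ⟨by decide, by norm_num, by norm_num⟩, by decide, by decide⟩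

theorem good_all : ∀ n, 78 ≤ n → n ≠ 91 → n ≠ 98 → Good n := by
  intro n
  induction n using Nat.strong_induction_on with
  | _ n ih =>
    intro h78 h91 h98
    by_cases hsmall : n ≤ 220
    · interval_cases n
      · exact good_78
      · exact good_79
      · exact good_80
      · exact good_81
      · exact good_82
      · exact good_83
      · exact good_84
      · exact good_85
      · exact good_86
      · exact good_87
      · exact good_88
      · exact good_89
      · exact good_90
      · exact absurd rfl h91
      · exact good_92
      · exact good_93
      · exact good_94
      · exact good_95
      · exact good_96
      · exact good_97
      · exact absurd rfl h98
      · exact good_99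
      · exact good_100
      · exact good_101
      · exact good_102
      · exact good_103
      · exact good_104
      · exact good_105
      · exact good_106
      · exact good_107
      · exact good_108
      · exact good_109
      · exact good_110
      · exact good_111
      · exact good_112
      · exact good_113
      · exact good_114
      · exact good_115
      · exact good_116
      · exact good_117
      · exact good_118
      · exact good_119
      · exact good_120
      · exact good_121
      · exact good_122
      · exact good_123
      · exact good_124
      · exact good_125
      · exact good_126
      · exact good_127
      · exact good_128
      · exact good_129
      · exact good_130
      · exact good_131
      · exact good_132
      · exact good_133
      · exact good_134
      · exact good_135
      · exact good_136
      · exact good_137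
      · exact good_138
      · exact good_139
      · exact good_140
      · exact good_141
      · exact good_142
      · exact good_143
      · exact good_144
      · exact good_145
      · exact good_146
      · exact good_147
      · exact good_148
      · exact good_149
      · exact good_150
      · exact good_151
      · exact good_152
      · exact good_153
      · exact good_154
      · exact good_155
      · exact good_156
      · exact good_157
      · exact good_158
      · exact good_159
      · exact good_160
      · exact good_161
      · exact good_162
      · exact good_163
      · exact good_164
      · exact good_165
      · exact good_166
      · exact good_167
      · exact good_168
      · exact good_169
      · exact good_170
      · exact good_171
      · exact good_172
      · exact good_173
      · exact good_174
      · exact good_175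
      · exact good_176
      · exact good_177
      · exact good_178
      · exact good_179
      · exact good_180
      · exact good_181
      · exact good_182
      · exact good_183
      · exact good_184
      · exact good_185
      · exact good_186
      · exact good_187
      · exact good_188
      · exact good_189
      · exact good_190
      · exact good_191
      · exact good_192
      · exact good_193
      · exact good_194
      · exact good_195
      · exact good_196
      · exact good_197
      · exact good_198
      · exact good_199
      · exact good_200
      · exact good_201
      · exact good_202
      · exact good_203
      · exact good_204
      · exact good_205
      · exact good_206
      · exact good_207
      · exact good_208
      · exact good_209
      · exact good_210
      · exact good_211
      · exact good_212
      · exact good_213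
      · exact good_214
      · exact good_215
      · exact good_216
      · exact good_217
      · exact good_218
      · exact good_219
      · exact good_220
    · by_cases h247 : n = 247
      · subst h247; exact good_247
      by_cases h261 : n = 261
      · subst h261; exact good_261
      push_neg at hsmall
      rcases Nat.even_or_odd n with ⟨k, hk⟩ | ⟨k, hk⟩
      · have hm : n = 2 * (k - 1) + 2 := by omega
        rw [hm]
        exact step_even (ih (k - 1) (by omega) (by omega) (by omega) (by omega))
      · have hm : n = 2 * (k - 32) + 65 := by omega
        rw [hm]
        exact step_odd (ih (k - 32) (by omega) (by omega) (by omega) (by omega))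

/-- Every integer `n ≥ 78` admits a `1`-partition. -/
theorem graham_78 (n : ℕ) (hn : 78 ≤ n) : ∃ A : Finset ℕ, IsPartition 1 n A := by
  by_cases h91 : n = 91
  · subst h91
    exact ⟨{3,4,6,11,12,22,33}, by decide, by norm_num, by norm_num⟩
  by_cases h98 : n = 98
  · subst h98
    exact ⟨{3,4,5,11,20,22,33}, by decide, by norm_num, by norm_num⟩
  obtain ⟨A, hA, -, -⟩ := good_all n hn h91 h98
  exact ⟨A, hA⟩
end
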